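/- arXiv:1304.5504 — 6 statements merged into one kernel-verified Lean document; each statement's English description precedes it below -/
import Mathlib

section
/- Let F(x) = F̂(x) + g(x) where F̂ is convex on B and g is β-strongly convex on B, and let the sequence (x_t) be defined by x_{t+1} = argmin_{x ∈ B} (1/2)‖x − (x_t − η v_t)‖₂² + η g(x), where v_t is any vector and w_t denotes a subgradient of F̂ at x_t. Then for any x ∈ B, ∑_{t=1}^T [ F̂(x_t) + g(x_{t+1}) − F̂(x) − g(x) ] ≤ ‖x − x₁‖₂²/(2η) + (η/2)∑_{t=1}^T ‖v_t‖₂² + ∑_{t=1}^T ⟨x − x_t, v_t − w_t⟩ − (β/2)∑_{t=1}^T ‖x − x_{t+1}‖₂². -/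
/-!
Each proximal step minimizes the `(1 + ηβ)`-strongly convex objective
`z ↦ ½‖z - (x_t - η v_t)‖² + η g z` over the ball, so its value at any competitor `y` exceeds the
minimum by at least `(1 + ηβ)/2 ‖y - x_{t+1}‖²`. Expanding the square around `x_t` and adding the
subgradient inequality for `F̂` at `x_t` gives a one-step bound in which the distances
`‖y - x_t‖²/(2η)` telescope.
-/

open Filter Topology Finset

lemma le_of_forall_mul_one_sub_le {K D : ℝ} (h : ∀ a : ℝ, 0 < a → a ≤ 1 → K * (1 - a) ≤ D) :
    K ≤ D := by
  have hlim : Tendsto (fun a : ℝ => K * (1 - a)) (𝓝[>] 0) (𝓝 K) := by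
    have hcont : Continuous fun a : ℝ => K * (1 - a) := by fun_prop
    simpa using (hcont.tendsto 0).mono_left nhdsWithin_le_nhds
  refine le_of_tendsto hlim ?_
  filter_upwards [Ioc_mem_nhdsGT one_pos] with a ha using h a ha.1 ha.2

section StrongConvexity

variable {E : Type*} [NormedAddCommGroup E] [NormedSpace ℝ E] {s : Set E} {m n c : ℝ}
  {f g : E → ℝ}

lemma StrongConvexOn.add (hf : StrongConvexOn s m f) (hg : StrongConvexOn s n g) :
    StrongConvexOn s (m + n) fun x => f x + g x :=
  (UniformConvexOn.add hf hg).mono fun r => le_of_eq <| by simp only [Pi.add_apply]; ring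

lemma StrongConvexOn.const_mul (hf : StrongConvexOn s m f) (hc : 0 ≤ c) :
    StrongConvexOn s (c * m) fun x => c * f x := by
  refine ⟨hf.1, fun x hx y hy a b ha hb hab => ?_⟩
  have hscaled := mul_le_mul_of_nonneg_left (hf.2 hx hy ha hb hab) hc
  simp only [smul_eq_mul] at hscaled ⊢
  linarith

lemma StrongConvexOn.add_sq_norm_sub_le_of_isMinOn (hf : StrongConvexOn s m f) {p y : E}
    (hp : p ∈ s) (hmin : IsMinOn f s p) (hy : y ∈ s) :
    f p + m / 2 * ‖y - p‖ ^ 2 ≤ f y := by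
  suffices m / 2 * ‖y - p‖ ^ 2 ≤ f y - f p by linarith
  refine le_of_forall_mul_one_sub_le fun a ha0 ha1 => le_of_mul_le_mul_left ?_ ha0
  have hcomb := hf.2 hy hp ha0.le (sub_nonneg.2 ha1) (add_sub_cancel a 1)
  have hle := isMinOn_iff.1 hmin _ (hf.1 hy hp ha0.le (sub_nonneg.2 ha1) (add_sub_cancel a 1))
  simp only [smul_eq_mul] at hcomb
  linarith

end StrongConvexity

section InnerProductSpace

variable {E : Type*} [NormedAddCommGroup E] [InnerProductSpace ℝ E] {s : Set E}

lemma strongConvexOn_half_sq_norm_sub (hs : Convex ℝ s) (u : E) :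
    StrongConvexOn s 1 fun x => 1 / 2 * ‖x - u‖ ^ 2 := by
  refine ⟨hs, fun x _ y _ a b _ _ hab => le_of_eq ?_⟩
  obtain rfl := eq_sub_of_add_eq' hab
  dsimp only
  have hsplit : a • x + (1 - a) • y - u = a • (x - u) + (1 - a) • (y - u) := by
    match_scalars <;> ring
  rw [hsplit, ← sub_sub_sub_cancel_right x y u, norm_add_sq_real,
    norm_sub_sq_real (x - u) (y - u), norm_smul, norm_smul, real_inner_smul_left,
    real_inner_smul_right]
  simp only [Real.norm_eq_abs, mul_pow, sq_abs, smul_eq_mul]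
  ring

lemma norm_sub_sub_smul_sq (x y v : E) (η : ℝ) :
    ‖y - (x - η • v)‖ ^ 2 = ‖y - x‖ ^ 2 + 2 * η * inner ℝ (y - x) v + η ^ 2 * ‖v‖ ^ 2 := by
  rw [show y - (x - η • v) = (y - x) + η • v by abel, norm_add_sq_real, real_inner_smul_right,
    norm_smul, mul_pow, Real.norm_eq_abs, sq_abs]
  ring

lemma StrongConvexOn.prox_step_le {g : E → ℝ} {β η : ℝ} (hg : StrongConvexOn s β g)
    (hη : 0 < η) {x v x' y : E} (hx' : x' ∈ s) (hy : y ∈ s)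
    (hmin : IsMinOn (fun z => 1 / 2 * ‖z - (x - η • v)‖ ^ 2 + η * g z) s x') :
    g x' - g y ≤ (‖y - x‖ ^ 2 - ‖y - x'‖ ^ 2) / (2 * η) + η / 2 * ‖v‖ ^ 2 +
      inner ℝ (y - x) v - β / 2 * ‖y - x'‖ ^ 2 := by
  have hprox : StrongConvexOn s (1 + η * β) fun z => 1 / 2 * ‖z - (x - η • v)‖ ^ 2 + η * g z :=
    (strongConvexOn_half_sq_norm_sub hg.1 _).add (hg.const_mul hη.le)
  have hgrowth := hprox.add_sq_norm_sub_le_of_isMinOn hx' hmin hy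
  rw [norm_sub_sub_smul_sq x y] at hgrowth
  -- the proximal distance term at the minimizer `x'` is simply discarded
  have hres := sq_nonneg ‖x' - (x - η • v)‖
  refine le_of_mul_le_mul_left ?_ (by positivity : (0 : ℝ) < 2 * η)
  have hscale : 2 * η * ((‖y - x‖ ^ 2 - ‖y - x'‖ ^ 2) / (2 * η) + η / 2 * ‖v‖ ^ 2 +
      inner ℝ (y - x) v - β / 2 * ‖y - x'‖ ^ 2) = ‖y - x‖ ^ 2 - ‖y - x'‖ ^ 2 +
      η ^ 2 * ‖v‖ ^ 2 + 2 * η * inner ℝ (y - x) v - η * β * ‖y - x'‖ ^ 2 := by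
    field_simp
  rw [hscale]
  linarith

end InnerProductSpace

lemma sum_Icc_le_div_add_sum_of_le_sub {T : ℕ} {a b D : ℕ → ℝ} {c : ℝ} (hc : 0 < c)
    (hD : 0 ≤ D (T + 1)) (h : ∀ t ∈ Icc 1 T, a t ≤ (D t - D (t + 1)) / c + b t) :
    ∑ t ∈ Icc 1 T, a t ≤ D 1 / c + ∑ t ∈ Icc 1 T, b t := by
  have htel : ∑ t ∈ Icc 1 T, (D t - D (t + 1)) = D 1 - D (T + 1) := by
    calc ∑ t ∈ Icc 1 T, (D t - D (t + 1)) = ∑ t ∈ Icc 1 T, (-D (t + 1) - -D t) :=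
          sum_congr rfl fun _ _ => by ring
      _ = D 1 - D (T + 1) := by
          rw [← Ico_add_one_right_eq_Icc, sum_Ico_sub (fun t => -D t) (by omega)]
          ring
  calc ∑ t ∈ Icc 1 T, a t ≤ ∑ t ∈ Icc 1 T, ((D t - D (t + 1)) / c + b t) := sum_le_sum h
    _ = (D 1 - D (T + 1)) / c + ∑ t ∈ Icc 1 T, b t := by rw [sum_add_distrib, ← sum_div, htel]
    _ ≤ D 1 / c + ∑ t ∈ Icc 1 T, b t := by gcongr; linarith

theorem stmt_4_general {d : ℕ} (r β η : ℝ) (hη : 0 < η)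
    (Fhat g : EuclideanSpace ℝ (Fin d) → ℝ)
    (hgsc : ∀ x : EuclideanSpace ℝ (Fin d), ‖x‖ ≤ r → ∀ y : EuclideanSpace ℝ (Fin d),
      ‖y‖ ≤ r → ∀ s ∈ Set.Icc (0 : ℝ) 1,
      g (s • x + (1 - s) • y) ≤ s * g x + (1 - s) * g y - β / 2 * s * (1 - s) * ‖x - y‖ ^ 2)
    (T : ℕ) (x v w : ℕ → EuclideanSpace ℝ (Fin d))
    (hxB : ∀ t, ‖x t‖ ≤ r)
    (hupd : ∀ t, 1 ≤ t → t ≤ T → ∀ y : EuclideanSpace ℝ (Fin d), ‖y‖ ≤ r →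
      (1 / 2) * ‖x (t + 1) - (x t - η • v t)‖ ^ 2 + η * g (x (t + 1)) ≤
        (1 / 2) * ‖y - (x t - η • v t)‖ ^ 2 + η * g y)
    (hw : ∀ t, 1 ≤ t → t ≤ T → ∀ y : EuclideanSpace ℝ (Fin d), ‖y‖ ≤ r →
      Fhat (x t) + (inner ℝ (w t) (y - x t) : ℝ) ≤ Fhat y)
    (xx : EuclideanSpace ℝ (Fin d)) (hxx : ‖xx‖ ≤ r) :
    ∑ t ∈ Finset.Icc 1 T, (Fhat (x t) + g (x (t + 1)) - Fhat xx - g xx) ≤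
      ‖xx - x 1‖ ^ 2 / (2 * η) + η / 2 * ∑ t ∈ Finset.Icc 1 T, ‖v t‖ ^ 2 +
        ∑ t ∈ Finset.Icc 1 T, (inner ℝ (xx - x t) (v t - w t) : ℝ) -
        β / 2 * ∑ t ∈ Finset.Icc 1 T, ‖xx - x (t + 1)‖ ^ 2 := by
  have hg : StrongConvexOn (Metric.closedBall 0 r) β g := by
    refine ⟨convex_closedBall 0 r, fun y hy z hz a b ha _ hab => ?_⟩
    obtain rfl := eq_sub_of_add_eq' hab
    have hgyz := hgsc y (mem_closedBall_zero_iff.1 hy) z (mem_closedBall_zero_iff.1 hz) a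
      ⟨ha, by linarith⟩
    simp only [smul_eq_mul]
    linarith
  have hstep : ∀ t ∈ Icc 1 T, Fhat (x t) + g (x (t + 1)) - Fhat xx - g xx ≤
      (‖xx - x t‖ ^ 2 - ‖xx - x (t + 1)‖ ^ 2) / (2 * η) + (η / 2 * ‖v t‖ ^ 2 +
        inner ℝ (xx - x t) (v t - w t) - β / 2 * ‖xx - x (t + 1)‖ ^ 2) := by
    intro t ht
    obtain ⟨ht1, htT⟩ := mem_Icc.1 ht
    have hprox := hg.prox_step_le hη (mem_closedBall_zero_iff.2 (hxB (t + 1)))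
      (mem_closedBall_zero_iff.2 hxx)
      (isMinOn_iff.2 fun y hy => hupd t ht1 htT y (mem_closedBall_zero_iff.1 hy))
    have hsub := hw t ht1 htT xx hxx
    rw [inner_sub_right, real_inner_comm (w t)]
    linarith
  refine (sum_Icc_le_div_add_sum_of_le_sub (D := fun t => ‖xx - x t‖ ^ 2) (by positivity)
    (sq_nonneg _) hstep).trans_eq ?_
  rw [sum_sub_distrib, sum_add_distrib, ← mul_sum, ← mul_sum]
  ring

/-- the regret-style inequality for the proximal update
`x_{t+1} = argmin_{x ∈ B} (1/2)‖x - (x_t - η v_t)‖² + η g(x)` on the ball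
`B = {x : ‖x‖ ≤ r}`, where `F = F̂ + g`, `F̂` is convex on `B`, `g` is `β`-strongly convex
on `B`, and `w_t` is a subgradient of `F̂` at `x_t`. -/
theorem stmt_4 {d : ℕ} (r β η : ℝ) (hr : 0 < r) (hβ : 0 < β) (hη : 0 < η)
    (Fhat g : EuclideanSpace ℝ (Fin d) → ℝ)
    (hFhat : ConvexOn ℝ {y : EuclideanSpace ℝ (Fin d) | ‖y‖ ≤ r} Fhat)
    (hgsc : ∀ x : EuclideanSpace ℝ (Fin d), ‖x‖ ≤ r → ∀ y : EuclideanSpace ℝ (Fin d),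
      ‖y‖ ≤ r → ∀ s ∈ Set.Icc (0 : ℝ) 1,
      g (s • x + (1 - s) • y) ≤ s * g x + (1 - s) * g y - β / 2 * s * (1 - s) * ‖x - y‖ ^ 2)
    (T : ℕ) (x v w : ℕ → EuclideanSpace ℝ (Fin d))
    (hxB : ∀ t, ‖x t‖ ≤ r)
    (hupd : ∀ t, 1 ≤ t → t ≤ T → ∀ y : EuclideanSpace ℝ (Fin d), ‖y‖ ≤ r →
      (1 / 2) * ‖x (t + 1) - (x t - η • v t)‖ ^ 2 + η * g (x (t + 1)) ≤
        (1 / 2) * ‖y - (x t - η • v t)‖ ^ 2 + η * g y)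
    (hw : ∀ t, 1 ≤ t → t ≤ T → ∀ y : EuclideanSpace ℝ (Fin d), ‖y‖ ≤ r →
      Fhat (x t) + (inner ℝ (w t) (y - x t) : ℝ) ≤ Fhat y)
    (xx : EuclideanSpace ℝ (Fin d)) (hxx : ‖xx‖ ≤ r) :
    ∑ t ∈ Finset.Icc 1 T, (Fhat (x t) + g (x (t + 1)) - Fhat xx - g xx) ≤
      ‖xx - x 1‖ ^ 2 / (2 * η) + η / 2 * ∑ t ∈ Finset.Icc 1 T, ‖v t‖ ^ 2 +
        ∑ t ∈ Finset.Icc 1 T, (inner ℝ (xx - x t) (v t - w t) : ℝ) -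
        β / 2 * ∑ t ∈ Finset.Icc 1 T, ‖xx - x (t + 1)‖ ^ 2 :=
  stmt_4_general r β η hη Fhat g hgsc T x v w hxB hupd hw xx hxx
end

section
/- (Bernstein's inequality for martingales.) Let X₁, ..., X_n be a martingale difference sequence with respect to a filtration (𝔉_i)_{1 ≤ i ≤ n} with |X_i| ≤ K almost surely, let S_i = ∑_{j=1}^i X_j, and let Σ_n² = ∑_{t=1}^n E[X_t² | 𝔉_{t−1}] be the sum of conditional variances. Then for all constants t, ν > 0, ℙ[ max_{i=1,...,n} S_i > t and Σ_n² ≤ ν ] ≤ exp( −t² / (2(ν + Kt/3)) ), and consequently ℙ[ max_{i=1,...,n} S_i > √(2νt) + (√2/3)Kt and Σ_n² ≤ ν ] ≤ e^{−t}. -/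
/-!
For `0 ≤ λ` with `λK < 3`, the bound `exp u ≤ 1 + u + 3u² / (2(3 - λK))` for `|u| ≤ λK`,
together with `E[Xᵢ | 𝔉ᵢ₋₁] = 0`, gives `E[exp(λXᵢ) | 𝔉ᵢ₋₁] ≤ exp(κ E[Xᵢ² | 𝔉ᵢ₋₁])` with
`κ = 3λ² / (2(3 - λK))`. Hence `Mᵢ = exp(λSᵢ - κΣᵢ²)` is a nonnegative supermartingale with
`M₀ = 1`. As `Σᵢ²` is nondecreasing, on `{max Sᵢ > s, Σₙ² ≤ ν}` some `Mᵢ` reaches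
`exp(λs - κν)`; stopping `M` at the first such time bounds the probability by `exp(κν - λs)`.
The two inequalities come from `λ = t / (ν + Kt/3)` and `λ = r / (1 + Kr/3)` with `r = √(2t/ν)`.
-/

open MeasureTheory Finset

theorem Real.exp_le_one_add_add_sq_of_abs_le {u b : ℝ} (hub : |u| ≤ b) (hb3 : b < 3) :
    Real.exp u ≤ 1 + u + 3 / (2 * (3 - b)) * u ^ 2 := by
  have hb : 0 ≤ b := (abs_nonneg u).trans hub
  have hb0 : 0 ≤ b / 3 := by positivity
  have hb1 : b / 3 < 1 := by linarith
  have hsum := Real.summable_pow_div_factorial u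
  have hterm (n : ℕ) : u ^ (n + 2) / (n + 2).factorial ≤ u ^ 2 / 2 * (b / 3) ^ n := by
    have hfact : (2 * 3 ^ n : ℝ) ≤ (n + 2).factorial := by
      exact_mod_cast add_comm n 2 ▸ Nat.factorial_mul_pow_le_factorial (m := 2) (n := n)
    have hpow : u ^ (n + 2) ≤ u ^ 2 * b ^ n := by
      calc u ^ (n + 2) ≤ |u| ^ (n + 2) := (le_abs_self _).trans_eq (abs_pow u _)
        _ = u ^ 2 * |u| ^ n := by rw [pow_add, mul_comm, sq_abs]
        _ ≤ u ^ 2 * b ^ n := by gcongr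
    calc u ^ (n + 2) / (n + 2).factorial ≤ u ^ 2 * b ^ n / (2 * 3 ^ n) := by gcongr
      _ = u ^ 2 / 2 * (b / 3) ^ n := by rw [div_pow]; ring
  calc Real.exp u
      = ∑ n ∈ range 2, u ^ n / n.factorial + ∑' n : ℕ, u ^ (n + 2) / (n + 2).factorial := by
        rw [Real.exp_eq_exp_ℝ, NormedSpace.exp_eq_tsum_div, hsum.sum_add_tsum_nat_add]
    _ ≤ 1 + u + ∑' n : ℕ, u ^ 2 / 2 * (b / 3) ^ n := by
        have hgeo := (summable_geometric_of_lt_one hb0 hb1).mul_left (u ^ 2 / 2)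
        norm_num [sum_range_succ]
        exact ((summable_nat_add_iff 2).2 hsum).tsum_le_tsum hterm hgeo
    _ = 1 + u + 3 / (2 * (3 - b)) * u ^ 2 := by
        rw [tsum_mul_left, tsum_geometric_of_lt_one hb0 hb1]
        field_simp

theorem integrable_exp_mul_of_le {Ω : Type*} {m0 : MeasurableSpace Ω} {P : Measure Ω}
    [IsFiniteMeasure P] {Z : Ω → ℝ} {K l : ℝ} (hZm : AEStronglyMeasurable Z P)
    (hZK : ∀ᵐ ω ∂P, Z ω ≤ K) (hl : 0 ≤ l) : Integrable (fun ω => Real.exp (l * Z ω)) P := by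
  refine .of_bound (Real.continuous_exp.comp_aestronglyMeasurable (hZm.const_mul l))
    (Real.exp (l * K)) ?_
  filter_upwards [hZK] with ω hω
  rw [Real.norm_eq_abs, abs_of_pos (Real.exp_pos _), Real.exp_le_exp]
  exact mul_le_mul_of_nonneg_left hω hl

noncomputable def bernsteinCoeff (K l : ℝ) : ℝ := 3 / (2 * (3 - l * K)) * l ^ 2

lemma bernsteinCoeff_nonneg {K l : ℝ} (hlK : l * K < 3) : 0 ≤ bernsteinCoeff K l :=
  mul_nonneg (div_nonneg (by norm_num) (by linarith)) (sq_nonneg l)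

theorem condExp_exp_mul_le {Ω : Type*} {m m0 : MeasurableSpace Ω} {P : Measure Ω}
    [IsFiniteMeasure P] {Z : Ω → ℝ} {K l : ℝ} (hm : m ≤ m0) (hZm : AEStronglyMeasurable Z P)
    (hZK : ∀ᵐ ω ∂P, |Z ω| ≤ K) (hZ : P[Z|m] =ᵐ[P] 0) (hl : 0 ≤ l) (hlK : l * K < 3) :
    P[fun ω => Real.exp (l * Z ω)|m] ≤ᵐ[P]
      fun ω => Real.exp (bernsteinCoeff K l * P[fun ω => Z ω ^ 2|m] ω) := by
  set κ := bernsteinCoeff K l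
  have hZint : Integrable Z P := .of_bound hZm K (by simpa only [Real.norm_eq_abs] using hZK)
  have hZ2int : Integrable (fun ω => Z ω ^ 2) P := by
    refine .of_bound (hZm.pow 2) (K ^ 2) ?_
    filter_upwards [hZK] with ω hω
    rw [Real.norm_eq_abs, abs_pow]
    exact pow_le_pow_left₀ (abs_nonneg _) hω 2
  have hexp_int := integrable_exp_mul_of_le hZm (hZK.mono fun ω hω => (abs_le.1 hω).2) hl
  set Q : Ω → ℝ := (fun _ => 1) + (l • Z + κ • fun ω => Z ω ^ 2)
  have hQint : Integrable Q P :=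
    (integrable_const 1).add ((hZint.smul l).add (hZ2int.smul κ))
  have hexp_le_Q : (fun ω => Real.exp (l * Z ω)) ≤ᵐ[P] Q := by
    filter_upwards [hZK] with ω hω
    have hlZ : |l * Z ω| ≤ l * K := by
      rw [abs_mul, abs_of_nonneg hl]
      exact mul_le_mul_of_nonneg_left hω hl
    calc Real.exp (l * Z ω) ≤ 1 + l * Z ω + 3 / (2 * (3 - l * K)) * (l * Z ω) ^ 2 :=
          Real.exp_le_one_add_add_sq_of_abs_le hlZ hlK
      _ = Q ω := by simp only [Q, κ, bernsteinCoeff, Pi.add_apply, Pi.smul_apply, smul_eq_mul]; ring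
  have hcondQ : P[Q|m] =ᵐ[P] fun ω => 1 + l * P[Z|m] ω + κ * P[fun ω => Z ω ^ 2|m] ω := by
    filter_upwards [condExp_add (integrable_const 1) ((hZint.smul l).add (hZ2int.smul κ)) m,
      condExp_add (hZint.smul l) (hZ2int.smul κ) m, condExp_smul l Z m,
      condExp_smul κ (fun ω => Z ω ^ 2) m] with ω h₁ h₂ h₃ h₄
    simp only [Q, h₁, Pi.add_apply, h₂, h₃, h₄, condExp_const hm, Pi.smul_apply, smul_eq_mul]
    ring
  filter_upwards [condExp_mono hexp_int hQint hexp_le_Q, hcondQ, hZ] with ω h₁ h₂ h₃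
  rw [h₂, h₃, Pi.zero_apply, mul_zero, add_zero] at h₁
  exact h₁.trans (by linarith [Real.add_one_le_exp (κ * P[fun ω => Z ω ^ 2|m] ω)])

theorem MeasureTheory.Supermartingale.maximal_ineq {Ω : Type*} {m0 : MeasurableSpace Ω}
    {P : Measure Ω} [IsFiniteMeasure P] {𝔉 : Filtration ℕ m0} {M : ℕ → Ω → ℝ}
    (hM : Supermartingale M 𝔉 P) (hnonneg : 0 ≤ M) {ε : ℝ} (hε : 0 ≤ ε) (n : ℕ) :
    ε * P.real {ω | ∃ i ≤ n, ε ≤ M i ω} ≤ ∫ ω, M 0 ω ∂P := by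
  set τ : Ω → ℕ∞ := fun ω => (hittingBtwn M (Set.Ici ε) 0 n ω : ℕ)
  have hτ : IsStoppingTime 𝔉 τ :=
    hM.stronglyAdapted.adapted.isStoppingTime_hittingBtwn measurableSet_Ici
  have hτn (ω : Ω) : τ ω ≤ n := WithTop.coe_le_coe.2 (hittingBtwn_le ω)
  have hint : Integrable (stoppedValue M τ) P := integrable_stoppedValue ℕ hτ hM.integrable hτn
  have hopt : ∫ ω, stoppedValue M τ ω ∂P ≤ ∫ ω, M 0 ω ∂P := by
    have := hM.neg.expected_stoppedValue_mono (isStoppingTime_const 𝔉 0) hτ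
      (fun _ => zero_le) hτn
    simpa [stoppedValue, integral_neg] using this
  have hsub : {ω | ∃ i ≤ n, ε ≤ M i ω} ⊆ {ω | ε ≤ stoppedValue M τ ω} :=
    fun ω ⟨i, hin, hi⟩ => stoppedValue_hittingBtwn_mem ⟨i, ⟨Nat.zero_le i, hin⟩, hi⟩
  calc ε * P.real {ω | ∃ i ≤ n, ε ≤ M i ω} ≤ ε * P.real {ω | ε ≤ stoppedValue M τ ω} :=
        mul_le_mul_of_nonneg_left (measureReal_mono hsub) hε
    _ ≤ ∫ ω, stoppedValue M τ ω ∂P :=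
        mul_meas_ge_le_integral_of_nonneg (.of_forall fun ω => hnonneg _ _) hint ε
    _ ≤ ∫ ω, M 0 ω ∂P := hopt

section BernsteinExp

variable {Ω : Type*} {m0 : MeasurableSpace Ω} (P : Measure Ω) (𝔉 : Filtration ℕ m0)
  (Y : ℕ → Ω → ℝ)

noncomputable def condSqSum (i : ℕ) (ω : Ω) : ℝ :=
  ∑ j ∈ Icc 1 i, P[fun ω' => Y j ω' ^ 2|𝔉 (j - 1)] ω

noncomputable def bernsteinExp (l κ : ℝ) (i : ℕ) (ω : Ω) : ℝ :=
  Real.exp (l * ∑ j ∈ Icc 1 i, Y j ω - κ * condSqSum P 𝔉 Y i ω)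

variable {P 𝔉 Y}

@[simp]
lemma condSqSum_zero : condSqSum P 𝔉 Y 0 = 0 := by
  ext ω; simp [condSqSum]

lemma condSqSum_succ (i : ℕ) :
    condSqSum P 𝔉 Y (i + 1) = condSqSum P 𝔉 Y i + P[fun ω => Y (i + 1) ω ^ 2|𝔉 i] := by
  ext ω; simp [condSqSum, sum_Icc_succ_top]

lemma stronglyMeasurable_condSqSum {i k : ℕ} (h : i ≤ k + 1) :
    StronglyMeasurable[𝔉 k] (condSqSum P 𝔉 Y i) :=
  Finset.stronglyMeasurable_fun_sum _ fun j hj =>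
    stronglyMeasurable_condExp.mono (𝔉.mono (by have := (mem_Icc.1 hj).2; omega))

lemma ae_monotone_condSqSum : ∀ᵐ ω ∂P, Monotone fun i => condSqSum P 𝔉 Y i ω := by
  have hnonneg : ∀ᵐ ω ∂P, ∀ i, 0 ≤ P[fun ω => Y (i + 1) ω ^ 2|𝔉 i] ω :=
    ae_all_iff.2 fun i => condExp_nonneg (.of_forall fun ω => sq_nonneg _)
  filter_upwards [hnonneg] with ω hω
  refine monotone_nat_of_le_succ fun i => ?_
  simpa [condSqSum_succ] using hω i

@[simp]
lemma bernsteinExp_zero (l κ : ℝ) : bernsteinExp P 𝔉 Y l κ 0 = 1 := by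
  ext ω; simp [bernsteinExp]

lemma bernsteinExp_succ (l κ : ℝ) (i : ℕ) (ω : Ω) :
    bernsteinExp P 𝔉 Y l κ (i + 1) ω =
      Real.exp (l * ∑ j ∈ Icc 1 i, Y j ω - κ * condSqSum P 𝔉 Y (i + 1) ω) *
        Real.exp (l * Y (i + 1) ω) := by
  rw [bernsteinExp, ← Real.exp_add, sum_Icc_succ_top (by omega)]
  ring_nf

theorem supermartingale_bernsteinExp [IsFiniteMeasure P] {K l : ℝ} (hadp : StronglyAdapted 𝔉 Y)
    (hbdd : ∀ i, ∀ᵐ ω ∂P, |Y i ω| ≤ K) (hmds : ∀ i, P[Y (i + 1)|𝔉 i] =ᵐ[P] 0)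
    (hl : 0 ≤ l) (hlK : l * K < 3) :
    Supermartingale (bernsteinExp P 𝔉 Y l (bernsteinCoeff K l)) 𝔉 P := by
  set κ := bernsteinCoeff K l
  have hκ : 0 ≤ κ := bernsteinCoeff_nonneg hlK
  have hsum_adp (i k : ℕ) (h : i ≤ k) : StronglyMeasurable[𝔉 k] fun ω => ∑ j ∈ Icc 1 i, Y j ω :=
    Finset.stronglyMeasurable_fun_sum _ fun j hj =>
      (hadp j).mono (𝔉.mono ((mem_Icc.1 hj).2.trans h))
  have hadpM : StronglyAdapted 𝔉 (bernsteinExp P 𝔉 Y l κ) := fun i =>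
    Real.continuous_exp.comp_stronglyMeasurable
      (((hsum_adp i i le_rfl).const_mul l).sub
        ((stronglyMeasurable_condSqSum (by omega)).const_mul κ))
  have hsum_le (i : ℕ) : ∀ᵐ ω ∂P, ∑ j ∈ Icc 1 i, Y j ω ≤ i * K := by
    filter_upwards [ae_all_iff.2 hbdd] with ω hω
    calc ∑ j ∈ Icc 1 i, Y j ω ≤ ∑ j ∈ Icc 1 i, K := sum_le_sum fun j _ => (abs_le.1 (hω j)).2
      _ = i * K := by simp
  have hint (i : ℕ) : Integrable (bernsteinExp P 𝔉 Y l κ i) P := by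
    refine .of_bound ((hadpM i).mono (𝔉.le i)).aestronglyMeasurable (Real.exp (l * (i * K))) ?_
    filter_upwards [hsum_le i, ae_monotone_condSqSum (𝔉 := 𝔉) (Y := Y)] with ω hS hV
    have hV0 : 0 ≤ condSqSum P 𝔉 Y i ω := by simpa using hV (Nat.zero_le i)
    rw [Real.norm_eq_abs, bernsteinExp, abs_of_pos (Real.exp_pos _), Real.exp_le_exp]
    nlinarith [mul_le_mul_of_nonneg_left hS hl, mul_nonneg hκ hV0]
  refine supermartingale_nat hadpM hint fun i => ?_
  set A : Ω → ℝ := fun ω =>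
    Real.exp (l * ∑ j ∈ Icc 1 i, Y j ω - κ * condSqSum P 𝔉 Y (i + 1) ω)
  have hA : StronglyMeasurable[𝔉 i] A :=
    Real.continuous_exp.comp_stronglyMeasurable
      (((hsum_adp i i le_rfl).const_mul l).sub ((stronglyMeasurable_condSqSum le_rfl).const_mul κ))
  have hM : bernsteinExp P 𝔉 Y l κ (i + 1) = A * fun ω => Real.exp (l * Y (i + 1) ω) :=
    funext (bernsteinExp_succ l κ i)
  have hY_int := integrable_exp_mul_of_le ((hadp (i + 1)).mono (𝔉.le _)).aestronglyMeasurable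
    ((hbdd (i + 1)).mono fun ω hω => (abs_le.1 hω).2) hl
  filter_upwards [condExp_mul_of_stronglyMeasurable_left hA (hM ▸ hint (i + 1)) hY_int,
    condExp_exp_mul_le (𝔉.le i) ((hadp (i + 1)).mono (𝔉.le _)).aestronglyMeasurable
      (hbdd (i + 1)) (hmds i) hl hlK] with ω hpull hstep
  rw [hM, hpull, Pi.mul_apply]
  calc A ω * P[fun ω => Real.exp (l * Y (i + 1) ω)|𝔉 i] ω
      ≤ A ω * Real.exp (κ * P[fun ω => Y (i + 1) ω ^ 2|𝔉 i] ω) :=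
        mul_le_mul_of_nonneg_left hstep (Real.exp_pos _).le
    _ = bernsteinExp P 𝔉 Y l κ i ω := by
        rw [bernsteinExp, ← Real.exp_add, condSqSum_succ, Pi.add_apply]
        ring_nf

theorem measure_exists_lt_sum_and_condSqSum_le_of_forall [IsProbabilityMeasure P] {K l : ℝ}
    (hadp : StronglyAdapted 𝔉 Y) (hbdd : ∀ i, ∀ᵐ ω ∂P, |Y i ω| ≤ K)
    (hmds : ∀ i, P[Y (i + 1)|𝔉 i] =ᵐ[P] 0) (hl : 0 ≤ l) (hlK : l * K < 3) (n : ℕ) (s ν : ℝ) :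
    P {ω | (∃ i ∈ Icc 1 n, s < ∑ j ∈ Icc 1 i, Y j ω) ∧ condSqSum P 𝔉 Y n ω ≤ ν} ≤
      ENNReal.ofReal (Real.exp (bernsteinCoeff K l * ν - l * s)) := by
  set κ := bernsteinCoeff K l
  have hκ : 0 ≤ κ := bernsteinCoeff_nonneg hlK
  set M := bernsteinExp P 𝔉 Y l κ
  set ε := Real.exp (l * s - κ * ν)
  -- `condSqSum` is nondecreasing, so crossing level `s` with `condSqSum n ≤ ν` pushes `M` above `ε`
  have hsub : {ω | (∃ i ∈ Icc 1 n, s < ∑ j ∈ Icc 1 i, Y j ω) ∧ condSqSum P 𝔉 Y n ω ≤ ν}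
      ≤ᵐ[P] {ω | ∃ i ≤ n, ε ≤ M i ω} := by
    filter_upwards [ae_monotone_condSqSum (P := P) (𝔉 := 𝔉) (Y := Y)]
      with ω hmono ⟨⟨i, hi, hs⟩, hν⟩
    refine ⟨i, (mem_Icc.1 hi).2, Real.exp_le_exp.2 ?_⟩
    have hVi : condSqSum P 𝔉 Y i ω ≤ ν := (hmono (mem_Icc.1 hi).2).trans hν
    nlinarith [mul_le_mul_of_nonneg_left hs.le hl, mul_le_mul_of_nonneg_left hVi hκ]
  have hmax : ε * P.real {ω | ∃ i ≤ n, ε ≤ M i ω} ≤ 1 := by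
    simpa using (supermartingale_bernsteinExp hadp hbdd hmds hl hlK).maximal_ineq
      (fun i ω => (Real.exp_pos _).le) (Real.exp_pos _).le n
  calc P _ ≤ P {ω | ∃ i ≤ n, ε ≤ M i ω} := measure_mono_ae hsub
    _ = ENNReal.ofReal (P.real {ω | ∃ i ≤ n, ε ≤ M i ω}) :=
        (ofReal_measureReal (measure_ne_top _ _)).symm
    _ ≤ ENNReal.ofReal (Real.exp (κ * ν - l * s)) := by
        refine ENNReal.ofReal_le_ofReal ?_
        rw [show κ * ν - l * s = -(l * s - κ * ν) by ring, Real.exp_neg, ← one_div,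
          le_div_iff₀ (Real.exp_pos _), mul_comm]
        exact hmax

theorem measure_exists_lt_sum_and_condSqSum_le [IsProbabilityMeasure P] {n : ℕ}
    {X : ℕ → Ω → ℝ} {K l : ℝ} (hadp : ∀ i, 1 ≤ i → i ≤ n → StronglyMeasurable[𝔉 i] (X i))
    (hmds : ∀ i, 1 ≤ i → i ≤ n → P[X i|𝔉 (i - 1)] =ᵐ[P] 0)
    (hbdd : ∀ i, 1 ≤ i → i ≤ n → ∀ᵐ ω ∂P, |X i ω| ≤ K) (hK : 0 ≤ K) (hl : 0 ≤ l)
    (hlK : l * K < 3) (s ν : ℝ) :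
    P {ω | (∃ i ∈ Icc 1 n, s < ∑ j ∈ Icc 1 i, X j ω) ∧ condSqSum P 𝔉 X n ω ≤ ν} ≤
      ENNReal.ofReal (Real.exp (bernsteinCoeff K l * ν - l * s)) := by
  set Y : ℕ → Ω → ℝ := fun i => if i ∈ Icc 1 n then X i else 0
  have hYX {i : ℕ} (hi : i ∈ Icc 1 n) : Y i = X i := if_pos hi
  have hY0 {i : ℕ} (hi : i ∉ Icc 1 n) : Y i = 0 := if_neg hi
  have hsum {i : ℕ} (hi : i ≤ n) (ω : Ω) : ∑ j ∈ Icc 1 i, Y j ω = ∑ j ∈ Icc 1 i, X j ω :=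
    sum_congr rfl fun j hj => by rw [hYX (Icc_subset_Icc_right hi hj)]
  have hV : condSqSum P 𝔉 Y n = condSqSum P 𝔉 X n := by
    ext ω
    exact sum_congr rfl fun j hj => by rw [hYX hj]
  have hYadp : StronglyAdapted 𝔉 Y := fun i => by
    by_cases hi : i ∈ Icc 1 n
    · rw [hYX hi]; exact hadp i (mem_Icc.1 hi).1 (mem_Icc.1 hi).2
    · rw [hY0 hi]; exact stronglyMeasurable_const
  have hYbdd (i : ℕ) : ∀ᵐ ω ∂P, |Y i ω| ≤ K := by
    by_cases hi : i ∈ Icc 1 n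
    · rw [hYX hi]; exact hbdd i (mem_Icc.1 hi).1 (mem_Icc.1 hi).2
    · simp [hY0 hi, hK]
  have hYmds (i : ℕ) : P[Y (i + 1)|𝔉 i] =ᵐ[P] 0 := by
    by_cases hi : i + 1 ∈ Icc 1 n
    · rw [hYX hi]; exact hmds (i + 1) (mem_Icc.1 hi).1 (mem_Icc.1 hi).2
    · simp [hY0 hi]
  convert measure_exists_lt_sum_and_condSqSum_le_of_forall hYadp hYbdd hYmds hl hlK n s ν
    using 2
  ext ω
  rw [Set.mem_ofPred_eq, Set.mem_ofPred_eq, hV]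
  exact and_congr_left' (exists_congr fun i => and_congr_right fun hi => by
    rw [hsum (mem_Icc.1 hi).2])

end BernsteinExp

theorem exists_bernstein_exponent_eq {K t ν : ℝ} (hK : 0 ≤ K) (ht : 0 ≤ t) (hν : 0 < ν) :
    ∃ l, 0 ≤ l ∧ l * K < 3 ∧
      bernsteinCoeff K l * ν - l * t = -(t ^ 2) / (2 * (ν + K * t / 3)) := by
  have hD : 0 < ν + K * t / 3 := by positivity
  have h3 : 3 - t / (ν + K * t / 3) * K = 3 * ν / (ν + K * t / 3) := by
    field_simp; ring
  refine ⟨t / (ν + K * t / 3), by positivity, ?_, ?_⟩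
  · linarith [show 0 < 3 * ν / (ν + K * t / 3) by positivity]
  · rw [bernsteinCoeff, h3]
    field_simp
    ring

theorem exists_bernstein_exponent_le {K t ν : ℝ} (hK : 0 ≤ K) (ht : 0 ≤ t) (hν : 0 < ν) :
    ∃ l, 0 ≤ l ∧ l * K < 3 ∧
      bernsteinCoeff K l * ν - l * (√(2 * ν * t) + √2 / 3 * K * t) ≤ -t := by
  set r := √(2 * t / ν)
  have hr : 0 ≤ r := Real.sqrt_nonneg _
  have hνr : ν * r = √(2 * ν * t) := by
    rw [show 2 * ν * t = ν ^ 2 * (2 * t / ν) by field_simp, Real.sqrt_mul (sq_nonneg ν),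
      Real.sqrt_sq hν.le]
  have hνr2 : ν * r ^ 2 = 2 * t := by
    rw [Real.sq_sqrt (by positivity)]; field_simp
  have hE : 0 < 1 + K * r / 3 := by positivity
  have h3 : 3 - r / (1 + K * r / 3) * K = 3 / (1 + K * r / 3) := by
    field_simp; ring
  -- with this `l` the threshold `√(2νt) + Kt/3` gives exactly `-t`; `√2 / 3 ≥ 1 / 3` does the rest
  have hexact : bernsteinCoeff K (r / (1 + K * r / 3)) * ν -
      r / (1 + K * r / 3) * (√(2 * ν * t) + K * t / 3) = -t := by
    rw [bernsteinCoeff, h3, ← hνr]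
    field_simp
    linear_combination -3 * hνr2
  refine ⟨r / (1 + K * r / 3), by positivity, ?_, ?_⟩
  · linarith [show 0 < 3 / (1 + K * r / 3) by positivity]
  · have hsqrt2 : 1 ≤ √2 := Real.one_le_sqrt.2 (by norm_num)
    have : r / (1 + K * r / 3) * (K * t / 3) ≤ r / (1 + K * r / 3) * (√2 / 3 * K * t) := by
      gcongr
      nlinarith [mul_nonneg hK ht]
    linarith

theorem stmt_5_general {Ω : Type*} {m0 : MeasurableSpace Ω}
    (P : Measure Ω) [IsProbabilityMeasure P] (𝔉 : MeasureTheory.Filtration ℕ m0)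
    (n : ℕ) (X : ℕ → Ω → ℝ) (K : ℝ)
    (hadp : ∀ i, 1 ≤ i → i ≤ n → StronglyMeasurable[𝔉 i] (X i))
    (hmds : ∀ i, 1 ≤ i → i ≤ n → P[X i | 𝔉 (i - 1)] =ᵐ[P] 0)
    (hbdd : ∀ i, 1 ≤ i → i ≤ n → ∀ᵐ ω ∂P, |X i ω| ≤ K)
    (S : ℕ → Ω → ℝ) (hS : ∀ i ω, S i ω = ∑ j ∈ Finset.Icc 1 i, X j ω)
    (Vsum : Ω → ℝ)
    (hVsum : ∀ ω, Vsum ω = ∑ t ∈ Finset.Icc 1 n, (P[fun ω' => X t ω' ^ 2 | 𝔉 (t - 1)]) ω)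
    (t ν : ℝ) (ht : 0 < t) (hν : 0 < ν) :
    P {ω | (∃ i ∈ Finset.Icc 1 n, t < S i ω) ∧ Vsum ω ≤ ν} ≤
        ENNReal.ofReal (Real.exp (-(t ^ 2) / (2 * (ν + K * t / 3)))) ∧
    P {ω | (∃ i ∈ Finset.Icc 1 n, Real.sqrt (2 * ν * t) + Real.sqrt 2 / 3 * K * t < S i ω) ∧
          Vsum ω ≤ ν} ≤
        ENNReal.ofReal (Real.exp (-t)) := by
  rcases Nat.eq_zero_or_pos n with rfl | hn
  · simp
  have hK : 0 ≤ K := by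
    obtain ⟨ω, hω⟩ := (hbdd 1 le_rfl hn).exists
    exact (abs_nonneg _).trans hω
  have hset (s : ℝ) : {ω | (∃ i ∈ Icc 1 n, s < S i ω) ∧ Vsum ω ≤ ν} =
      {ω | (∃ i ∈ Icc 1 n, s < ∑ j ∈ Icc 1 i, X j ω) ∧ condSqSum P 𝔉 X n ω ≤ ν} := by
    simp only [hS, hVsum, condSqSum]
  obtain ⟨l₁, hl₁, hl₁K, he₁⟩ := exists_bernstein_exponent_eq hK ht.le hν
  obtain ⟨l₂, hl₂, hl₂K, he₂⟩ := exists_bernstein_exponent_le hK ht.le hν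
  rw [hset, hset]
  refine ⟨?_, ?_⟩
  · simpa only [he₁] using
      measure_exists_lt_sum_and_condSqSum_le hadp hmds hbdd hK hl₁ hl₁K t ν
  · exact (measure_exists_lt_sum_and_condSqSum_le hadp hmds hbdd hK hl₂ hl₂K _ ν).trans
      (ENNReal.ofReal_le_ofReal (Real.exp_le_exp.2 he₂))

/-- Bernstein's inequality for martingales. For a martingale difference
sequence `X₁, …, Xₙ` with `|Xᵢ| ≤ K` a.s., partial sums `Sᵢ` and sum of conditional
variances `Σₙ²`, for all `t, ν > 0`:
`ℙ[max_i Sᵢ > t ∧ Σₙ² ≤ ν] ≤ exp(-t²/(2(ν + Kt/3)))`, and consequently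
`ℙ[max_i Sᵢ > √(2νt) + (√2/3)Kt ∧ Σₙ² ≤ ν] ≤ e^{-t}`. -/
theorem stmt_5 {Ω : Type*} {m0 : MeasurableSpace Ω}
    (P : Measure Ω) [IsProbabilityMeasure P] (𝔉 : MeasureTheory.Filtration ℕ m0)
    (n : ℕ) (X : ℕ → Ω → ℝ) (K : ℝ)
    (hadp : ∀ i, 1 ≤ i → i ≤ n → StronglyMeasurable[𝔉 i] (X i))
    (hint : ∀ i, 1 ≤ i → i ≤ n → Integrable (X i) P)
    (hmds : ∀ i, 1 ≤ i → i ≤ n → P[X i | 𝔉 (i - 1)] =ᵐ[P] 0)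
    (hbdd : ∀ i, 1 ≤ i → i ≤ n → ∀ᵐ ω ∂P, |X i ω| ≤ K)
    (S : ℕ → Ω → ℝ) (hS : ∀ i ω, S i ω = ∑ j ∈ Finset.Icc 1 i, X j ω)
    (Vsum : Ω → ℝ)
    (hVsum : ∀ ω, Vsum ω = ∑ t ∈ Finset.Icc 1 n, (P[fun ω' => X t ω' ^ 2 | 𝔉 (t - 1)]) ω)
    (t ν : ℝ) (ht : 0 < t) (hν : 0 < ν) :
    P {ω | (∃ i ∈ Finset.Icc 1 n, t < S i ω) ∧ Vsum ω ≤ ν} ≤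
        ENNReal.ofReal (Real.exp (-(t ^ 2) / (2 * (ν + K * t / 3)))) ∧
    P {ω | (∃ i ∈ Finset.Icc 1 n, Real.sqrt (2 * ν * t) + Real.sqrt 2 / 3 * K * t < S i ω) ∧
          Vsum ω ≤ ν} ≤
        ENNReal.ofReal (Real.exp (-t)) :=
  stmt_5_general P 𝔉 n X K hadp hmds hbdd S hS Vsum hVsum t ν ht hν
end

section
/- Fix x ∈ B and define D_T = ∑_{t=1}^T ‖x_t − x‖₂² and Λ_T = ∑_{t=1}^T ⟨x − x_t, g̃_t − ∇f(x_t)⟩, where each x_t ∈ B is 𝔉_{t−1}-measurable, g̃_t is 𝔉_t-measurable with E[g̃_t | 𝔉_{t−1}] = ∇f(x_t) and ‖g̃_t‖₂ ≤ G₁, ‖∇f(x_t)‖₂ ≤ G₁ almost surely. Then with m = ⌈2 log₂ T⌉, for any ε ∈ (0,1): ℙ( D_T ≤ 4r²/T ) + ℙ( Λ_T ≤ 4G₁ √(D_T ln(m/ε)) + (4√2/3) G₁ ln(m/ε) ) ≥ 1 − ε. -/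
/-!
On the event `D_T > 4 r² / T` the quadratic variation `V = 4 G₁² D_T` of the noise martingale
`∑ ⟨x - x_t, g̃_t - ∇f(x_t)⟩` lies in `(a, 2^m a]` with `a = 16 G₁² r² / T`, because
`D_T ≤ 4 r² T` and `T² ≤ 2^m`. The increments are bounded by the predictable quantities
`2 G₁ ‖x - x_t‖`, so the conditional Hoeffding lemma makes `exp (l Λ_k - l² V_k / 2)` a
supermartingale and Markov's inequality bounds `{l Λ_T - l² V / 2 ≥ ln (m / ε)}` by `ε / m` for each
fixed `l`. Splitting `(a, 2^m a]` into `m` dyadic shells and choosing `l` on each shell gives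
`Λ_T ≤ √(4 V ln (m / ε))` off an event of probability at most `ε`.
-/

open MeasureTheory Filter Real Finset

section

variable {Ω : Type*} {m0 : MeasurableSpace Ω} {μ : Measure Ω}

theorem exp_mul_le_cosh_add_sinh_div_mul {l y c : ℝ} (hy : |y| ≤ c) :
    exp (l * y) ≤ cosh (l * c) + sinh (l * c) / c * y := by
  obtain ⟨hcy, hyc⟩ := abs_le.1 hy
  rcases ((abs_nonneg y).trans hy).eq_or_lt with hc | hc
  · obtain rfl : y = 0 := by linarith
    simp [← hc]
  · -- `l * y` is the convex combination of `± l * c` with weights `(c ± y) / (2 * c)`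
    have key := convexOn_exp.2 (Set.mem_univ (l * c)) (Set.mem_univ (-(l * c)))
      (div_nonneg (by linarith) (by linarith) : 0 ≤ (c + y) / (2 * c))
      (div_nonneg (by linarith) (by linarith) : 0 ≤ (c - y) / (2 * c))
      (by field_simp; ring)
    have hly : (c + y) / (2 * c) * (l * c) + (c - y) / (2 * c) * -(l * c) = l * y := by
      field_simp; ring
    simp only [smul_eq_mul, hly] at key
    refine key.trans_eq ?_
    rw [cosh_eq, sinh_eq]
    field_simp
    ring

theorem integrable_exp_const_mul_of_abs_le [IsFiniteMeasure μ] {W : Ω → ℝ} {M : ℝ}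
    (hW : AEStronglyMeasurable W μ) (hWM : ∀ᵐ ω ∂μ, |W ω| ≤ M) (l : ℝ) :
    Integrable (fun ω => exp (l * W ω)) μ := by
  refine Integrable.of_bound (continuous_exp.comp_aestronglyMeasurable (hW.const_mul l))
    (exp (|l| * M)) ?_
  filter_upwards [hWM] with ω h
  rw [norm_of_nonneg (exp_pos _).le, exp_le_exp]
  calc l * W ω ≤ |l| * |W ω| := (le_abs_self _).trans_eq (abs_mul _ _)
    _ ≤ |l| * M := by gcongr

-- Conditional Hoeffding lemma: `exp (l * W)` lies below the chord of `exp` over `[-l c, l c]`,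
-- whose linear part has conditional mean zero, and `cosh x ≤ exp (x ^ 2 / 2)`.
theorem condExp_exp_mul_le_of_abs_le [IsFiniteMeasure μ] {m : MeasurableSpace Ω} (hm : m ≤ m0)
    {W c : Ω → ℝ} {M : ℝ} (hW : AEStronglyMeasurable[m0] W μ) (hc : StronglyMeasurable[m] c)
    (hcM : ∀ ω, c ω ≤ M) (hWc : ∀ᵐ ω ∂μ, |W ω| ≤ c ω) (hW0 : μ[W|m] =ᵐ[μ] 0) (l : ℝ) :
    μ[fun ω => exp (l * W ω)|m] ≤ᵐ[μ] fun ω => exp (l ^ 2 / 2 * c ω ^ 2) := by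
  set s : Ω → ℝ := fun ω => sinh (l * c ω) / c ω
  have hs : StronglyMeasurable[m] s :=
    ((continuous_sinh.comp_stronglyMeasurable (hc.const_mul l)).measurable.div
      hc.measurable).stronglyMeasurable
  have hcosh_le : ∀ᵐ ω ∂μ, cosh (l * c ω) ≤ cosh (|l| * M) := by
    filter_upwards [hWc] with ω h
    rw [cosh_le_cosh, abs_mul, abs_of_nonneg ((abs_nonneg _).trans h)]
    exact (mul_le_mul_of_nonneg_left (hcM ω) (abs_nonneg l)).trans (le_abs_self _)
  have hWM : ∀ᵐ ω ∂μ, |W ω| ≤ M := hWc.mono fun ω h => h.trans (hcM ω)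
  have hWint : Integrable W μ := Integrable.of_bound hW M hWM
  have hexp_int := integrable_exp_const_mul_of_abs_le hW hWM l
  have hcosh_int : Integrable (fun ω => cosh (l * c ω)) μ :=
    (integrable_const (cosh (|l| * M))).mono'
      ((continuous_cosh.comp_stronglyMeasurable (hc.const_mul l)).mono hm).aestronglyMeasurable
      (hcosh_le.mono fun ω h => (norm_of_nonneg (cosh_pos _).le).trans_le h)
  have hsW_int : Integrable (s * W) μ := by
    refine (integrable_const (cosh (|l| * M))).mono'
      ((hs.mono hm).aestronglyMeasurable.mul hW) ?_
    filter_upwards [hWc, hcosh_le] with ω h hcosh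
    calc ‖s ω * W ω‖ = |sinh (l * c ω)| * (|W ω| / |c ω|) := by
          simp only [s, norm_mul, norm_div, Real.norm_eq_abs]; ring
      _ ≤ |sinh (l * c ω)| * 1 := by
          gcongr
          exact div_le_one_of_le₀ (h.trans (le_abs_self _)) (abs_nonneg _)
      _ ≤ cosh (l * c ω) := by
          rw [mul_one, abs_sinh, ← cosh_abs]
          exact (sinh_lt_cosh _).le
      _ ≤ cosh (|l| * M) := hcosh
  calc μ[fun ω => exp (l * W ω)|m]
      ≤ᵐ[μ] μ[(fun ω => cosh (l * c ω)) + s * W|m] :=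
        condExp_mono hexp_int (hcosh_int.add hsW_int)
          (hWc.mono fun ω h => exp_mul_le_cosh_add_sinh_div_mul h)
    _ =ᵐ[μ] μ[fun ω => cosh (l * c ω)|m] + μ[s * W|m] := condExp_add hcosh_int hsW_int m
    _ =ᵐ[μ] (fun ω => cosh (l * c ω)) + s * μ[W|m] := by
        rw [condExp_of_stronglyMeasurable hm
          (continuous_cosh.comp_stronglyMeasurable (hc.const_mul l)) hcosh_int]
        exact EventuallyEq.rfl.add (condExp_mul_of_stronglyMeasurable_left hs hsW_int hWint)
    _ =ᵐ[μ] fun ω => cosh (l * c ω) := by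
        filter_upwards [hW0] with ω h
        simp [h]
    _ ≤ᵐ[μ] fun ω => exp (l ^ 2 / 2 * c ω ^ 2) :=
        ae_of_all _ fun ω => (cosh_le_exp_half_sq _).trans_eq (by ring_nf)

noncomputable def expSupermartingale (W c : ℕ → Ω → ℝ) (l : ℝ) (k : ℕ) (ω : Ω) : ℝ :=
  exp (l * ∑ t ∈ Icc 1 k, W t ω - l ^ 2 / 2 * ∑ t ∈ Icc 1 k, c t ω ^ 2)

theorem expSupermartingale_succ (W c : ℕ → Ω → ℝ) (l : ℝ) (k : ℕ) (ω : Ω) :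
    expSupermartingale W c l (k + 1) ω =
      expSupermartingale W c l k ω * exp (-(l ^ 2 / 2 * c (k + 1) ω ^ 2)) *
        exp (l * W (k + 1) ω) := by
  simp only [expSupermartingale, ← exp_add, sum_Icc_succ_top (Nat.le_add_left 1 k)]
  ring_nf

theorem stronglyMeasurable_expSupermartingale {𝔉 : Filtration ℕ m0} {W c : ℕ → Ω → ℝ} {k : ℕ}
    (hW : ∀ t, 1 ≤ t → t ≤ k → StronglyMeasurable[𝔉 t] (W t))
    (hc : ∀ t, 1 ≤ t → t ≤ k → StronglyMeasurable[𝔉 (t - 1)] (c t)) (l : ℝ) :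
    StronglyMeasurable[𝔉 k] (expSupermartingale W c l k) := by
  have hW' : ∀ t ∈ Icc 1 k, StronglyMeasurable[𝔉 k] (W t) := fun t ht =>
    (hW t (mem_Icc.1 ht).1 (mem_Icc.1 ht).2).mono (𝔉.mono (mem_Icc.1 ht).2)
  have hc' : ∀ t ∈ Icc 1 k, StronglyMeasurable[𝔉 k] (c t) := fun t ht =>
    (hc t (mem_Icc.1 ht).1 (mem_Icc.1 ht).2).mono (𝔉.mono (by grind))
  exact continuous_exp.comp_stronglyMeasurable
    (((stronglyMeasurable_fun_sum _ hW').const_mul l).sub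
      ((stronglyMeasurable_fun_sum _ fun t ht => (hc' t ht).pow 2).const_mul _))

theorem integrable_expSupermartingale [IsFiniteMeasure μ] {W c : ℕ → Ω → ℝ} {M l : ℝ} {k : ℕ}
    (hZ : AEStronglyMeasurable (expSupermartingale W c l k) μ)
    (hWM : ∀ t, 1 ≤ t → t ≤ k → ∀ᵐ ω ∂μ, |W t ω| ≤ M) :
    Integrable (expSupermartingale W c l k) μ := by
  refine Integrable.of_bound hZ (exp (|l| * ∑ _t ∈ Icc 1 k, M)) ?_
  have hWM' : ∀ᵐ ω ∂μ, ∀ t ∈ Icc 1 k, |W t ω| ≤ M :=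
    (eventually_all_finset _).2 fun t ht => hWM t (mem_Icc.1 ht).1 (mem_Icc.1 ht).2
  filter_upwards [hWM'] with ω h
  rw [expSupermartingale, norm_of_nonneg (exp_pos _).le, exp_le_exp]
  have hV : 0 ≤ l ^ 2 / 2 * ∑ t ∈ Icc 1 k, c t ω ^ 2 := by positivity
  calc l * ∑ t ∈ Icc 1 k, W t ω - l ^ 2 / 2 * ∑ t ∈ Icc 1 k, c t ω ^ 2
      ≤ |l| * |∑ t ∈ Icc 1 k, W t ω| := by
        linarith [(le_abs_self (l * ∑ t ∈ Icc 1 k, W t ω)).trans_eq (abs_mul _ _)]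
    _ ≤ |l| * ∑ t ∈ Icc 1 k, |W t ω| := by gcongr; exact abs_sum_le_sum_abs _ _
    _ ≤ |l| * ∑ _t ∈ Icc 1 k, M := by gcongr with t ht; exact h t ht

theorem condExp_expSupermartingale_succ_le [IsFiniteMeasure μ] {𝔉 : Filtration ℕ m0}
    {W c : ℕ → Ω → ℝ} {M l : ℝ} {k : ℕ}
    (hZ : StronglyMeasurable[𝔉 k] (expSupermartingale W c l k))
    (hZint : Integrable (expSupermartingale W c l (k + 1)) μ)
    (hW : AEStronglyMeasurable[m0] (W (k + 1)) μ) (hc : StronglyMeasurable[𝔉 k] (c (k + 1)))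
    (hcM : ∀ ω, c (k + 1) ω ≤ M) (hWc : ∀ᵐ ω ∂μ, |W (k + 1) ω| ≤ c (k + 1) ω)
    (hW0 : μ[W (k + 1)|𝔉 k] =ᵐ[μ] 0) :
    μ[expSupermartingale W c l (k + 1)|𝔉 k] ≤ᵐ[μ] expSupermartingale W c l k := by
  set F : Ω → ℝ := fun ω => expSupermartingale W c l k ω * exp (-(l ^ 2 / 2 * c (k + 1) ω ^ 2))
  have hF : StronglyMeasurable[𝔉 k] F :=
    hZ.mul (continuous_exp.comp_stronglyMeasurable ((hc.pow 2).const_mul _).neg)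
  have hsplit : expSupermartingale W c l (k + 1) = F * fun ω => exp (l * W (k + 1) ω) :=
    funext (expSupermartingale_succ W c l k)
  have hexp_int := integrable_exp_const_mul_of_abs_le hW
    (hWc.mono fun ω h => h.trans (hcM ω)) l
  rw [hsplit] at hZint ⊢
  filter_upwards [condExp_mul_of_stronglyMeasurable_left hF hZint hexp_int,
    condExp_exp_mul_le_of_abs_le (𝔉.le k) hW hc hcM hWc hW0 l] with ω hpull hhoeff
  rw [hpull, Pi.mul_apply]
  calc F ω * μ[fun ω => exp (l * W (k + 1) ω)|𝔉 k] ω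
      ≤ F ω * exp (l ^ 2 / 2 * c (k + 1) ω ^ 2) := by
        gcongr
        exact mul_nonneg (exp_pos _).le (exp_pos _).le
    _ = expSupermartingale W c l k ω := by rw [mul_assoc, ← exp_add]; simp

theorem integral_expSupermartingale_le_one [IsProbabilityMeasure μ] {𝔉 : Filtration ℕ m0}
    {W c : ℕ → Ω → ℝ} {M : ℝ} {n : ℕ}
    (hW : ∀ t, 1 ≤ t → t ≤ n → StronglyMeasurable[𝔉 t] (W t))
    (hc : ∀ t, 1 ≤ t → t ≤ n → StronglyMeasurable[𝔉 (t - 1)] (c t)) (hcM : ∀ t ω, c t ω ≤ M)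
    (hWc : ∀ t, 1 ≤ t → t ≤ n → ∀ᵐ ω ∂μ, |W t ω| ≤ c t ω)
    (hW0 : ∀ t, 1 ≤ t → t ≤ n → μ[W t|𝔉 (t - 1)] =ᵐ[μ] 0) (l : ℝ) {k : ℕ} (hk : k ≤ n) :
    ∫ ω, expSupermartingale W c l k ω ∂μ ≤ 1 := by
  have hZ : ∀ k ≤ n, StronglyMeasurable[𝔉 k] (expSupermartingale W c l k) := fun k hk =>
    stronglyMeasurable_expSupermartingale (fun t h1 h2 => hW t h1 (h2.trans hk))
      (fun t h1 h2 => hc t h1 (h2.trans hk)) l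
  have hint : ∀ k ≤ n, Integrable (expSupermartingale W c l k) μ := fun k hk =>
    integrable_expSupermartingale ((hZ k hk).mono (𝔉.le k)).aestronglyMeasurable
      fun t h1 h2 => (hWc t h1 (h2.trans hk)).mono fun ω h => h.trans (hcM t ω)
  induction k with
  | zero => simp [expSupermartingale]
  | succ k ih =>
    have hstep := condExp_expSupermartingale_succ_le (hZ k (by omega)) (hint (k + 1) hk)
      ((hW (k + 1) (by omega) hk).mono (𝔉.le _)).aestronglyMeasurable (hc (k + 1) (by omega) hk)
      (hcM (k + 1)) (hWc (k + 1) (by omega) hk) (hW0 (k + 1) (by omega) hk)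
    calc ∫ ω, expSupermartingale W c l (k + 1) ω ∂μ
        = ∫ ω, μ[expSupermartingale W c l (k + 1)|𝔉 k] ω ∂μ := (integral_condExp (𝔉.le k)).symm
      _ ≤ ∫ ω, expSupermartingale W c l k ω ∂μ :=
          integral_mono_ae integrable_condExp (hint k (by omega)) hstep
      _ ≤ 1 := ih (by omega)

theorem measureReal_le_sum_sub_sum_sq_le_exp_neg [IsProbabilityMeasure μ]
    {𝔉 : Filtration ℕ m0} {W c : ℕ → Ω → ℝ} {M : ℝ} {n : ℕ}
    (hW : ∀ t, 1 ≤ t → t ≤ n → StronglyMeasurable[𝔉 t] (W t))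
    (hc : ∀ t, 1 ≤ t → t ≤ n → StronglyMeasurable[𝔉 (t - 1)] (c t)) (hcM : ∀ t ω, c t ω ≤ M)
    (hWc : ∀ t, 1 ≤ t → t ≤ n → ∀ᵐ ω ∂μ, |W t ω| ≤ c t ω)
    (hW0 : ∀ t, 1 ≤ t → t ≤ n → μ[W t|𝔉 (t - 1)] =ᵐ[μ] 0) (L l : ℝ) :
    μ.real {ω | L ≤ l * ∑ t ∈ Icc 1 n, W t ω - l ^ 2 / 2 * ∑ t ∈ Icc 1 n, c t ω ^ 2}
      ≤ exp (-L) := by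
  have hmarkov := mul_meas_ge_le_integral_of_nonneg (ae_of_all _ fun ω => (exp_pos _).le)
    (integrable_expSupermartingale
      ((stronglyMeasurable_expSupermartingale hW hc l).mono (𝔉.le n)).aestronglyMeasurable
      fun t h1 h2 => (hWc t h1 h2).mono fun ω h => h.trans (hcM t ω)) (exp L)
  simp only [exp_le_exp] at hmarkov
  rw [exp_neg, ← one_div, le_div_iff₀' (exp_pos L)]
  exact hmarkov.trans (integral_expSupermartingale_le_one hW hc hcM hWc hW0 l le_rfl)

theorem exists_mem_Icc_le_two_pow_mul_lt {a V : ℝ} {m : ℕ} (haV : a < V) (hVm : V ≤ 2 ^ m * a) :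
    ∃ j ∈ Icc 1 m, V ≤ 2 ^ j * a ∧ 2 ^ j * a < 2 * V := by
  induction m with
  | zero => exact absurd hVm (by simpa using haV)
  | succ m ih =>
    by_cases h : V ≤ 2 ^ m * a
    · obtain ⟨j, hj, hj'⟩ := ih h
      exact ⟨j, Icc_subset_Icc_right m.le_succ hj, hj'⟩
    · exact ⟨m + 1, by simp, hVm, by rw [pow_succ]; linarith⟩

theorem le_sqrt_mul_sub_sq_mul_of_sqrt_le {q L Λ V : ℝ} (hq : 0 < q) (hL : 0 ≤ L) (hV : V ≤ q)
    (hΛ : √(2 * q * L) ≤ Λ) : L ≤ √(2 * L / q) * Λ - √(2 * L / q) ^ 2 / 2 * V := by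
  have hlin : √(2 * L / q) * √(2 * q * L) = 2 * L := by
    rw [← sqrt_mul (by positivity), show 2 * L / q * (2 * q * L) = (2 * L) ^ 2 by field_simp,
      sqrt_sq (by positivity)]
  have hquad : √(2 * L / q) ^ 2 / 2 * V ≤ L := by
    rw [sq_sqrt (by positivity), div_div, div_mul_eq_mul_div, div_le_iff₀ (by positivity)]
    nlinarith
  nlinarith [mul_le_mul_of_nonneg_left hΛ (sqrt_nonneg (2 * L / q))]

-- On the shell `2 ^ (j - 1) * a < V ≤ 2 ^ j * a` the exponent is tuned to the top of the shell:
-- `l = √(2 * L / (2 ^ j * a))`.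
theorem measureReal_peeling_le [IsFiniteMeasure μ] {Λ V : Ω → ℝ} {a L δ : ℝ} (ha : 0 < a)
    (hL : 0 ≤ L) (m : ℕ) (h : ∀ l, 0 ≤ l → μ.real {ω | L ≤ l * Λ ω - l ^ 2 / 2 * V ω} ≤ δ) :
    μ.real {ω | a < V ω ∧ V ω ≤ 2 ^ m * a ∧ √(4 * V ω * L) < Λ ω} ≤ m * δ := by
  set l : ℕ → ℝ := fun j => √(2 * L / (2 ^ j * a))
  have hsub : {ω | a < V ω ∧ V ω ≤ 2 ^ m * a ∧ √(4 * V ω * L) < Λ ω} ⊆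
      ⋃ j ∈ Icc 1 m, {ω | L ≤ l j * Λ ω - l j ^ 2 / 2 * V ω} := by
    rintro ω ⟨haV, hVm, hΛ⟩
    obtain ⟨j, hj, hVj, hjV⟩ := exists_mem_Icc_le_two_pow_mul_lt haV hVm
    refine Set.mem_biUnion hj (le_sqrt_mul_sub_sq_mul_of_sqrt_le (by positivity) hL hVj ?_)
    exact (sqrt_le_sqrt (by nlinarith)).trans hΛ.le
  calc μ.real {ω | a < V ω ∧ V ω ≤ 2 ^ m * a ∧ √(4 * V ω * L) < Λ ω}
      ≤ ∑ j ∈ Icc 1 m, μ.real {ω | L ≤ l j * Λ ω - l j ^ 2 / 2 * V ω} :=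
        (measureReal_mono hsub (measure_ne_top _ _)).trans (measureReal_biUnion_finset_le _ _)
    _ ≤ ∑ _j ∈ Icc 1 m, δ := sum_le_sum fun j _ => h _ (sqrt_nonneg _)
    _ = m * δ := by simp

section

variable {E : Type*} [NormedAddCommGroup E] [InnerProductSpace ℝ E]

theorem condExp_inner_sub_condExp_ae_eq_zero [CompleteSpace E] {m : MeasurableSpace Ω}
    (hm : m ≤ m0) [SigmaFinite (μ.trim hm)] {u g : Ω → E} (hu : StronglyMeasurable[m] u) {C : ℝ}
    (huC : ∀ᵐ ω ∂μ, ‖u ω‖ ≤ C) (hg : Integrable g μ) :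
    μ[fun ω => inner ℝ (u ω) (g ω - μ[g|m] ω)|m] =ᵐ[μ] 0 := by
  have hgγ : Integrable (fun ω => g ω - μ[g|m] ω) μ := hg.sub integrable_condExp
  have hγ : μ[μ[g|m]|m] = μ[g|m] :=
    condExp_of_stronglyMeasurable hm stronglyMeasurable_condExp integrable_condExp
  filter_upwards [condExp_bilin_of_aestronglyMeasurable_left (innerSL ℝ) hu.aestronglyMeasurable
    ((innerSL ℝ).integrable_of_bilin_of_bdd_left C (hu.mono hm).aestronglyMeasurable huC hgγ) hgγ,
    condExp_sub hg (integrable_condExp (m := m) (f := g)) m] with ω hpull hsub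
  refine hpull.trans ?_
  rw [show (fun ω => g ω - μ[g|m] ω) = g - μ[g|m] from rfl, hsub, hγ]
  simp

-- The summand of `Λ_T` with `∇f(x_t)` replaced by `E[g̃_t | 𝔉_{t-1}]`, which equals it a.s. and is
-- `𝔉_{t-1}`-measurable.
noncomputable def innerNoise (μ : Measure Ω) (𝔉 : Filtration ℕ m0) (y : E) (x g : ℕ → Ω → E)
    (t : ℕ) (ω : Ω) : ℝ :=
  inner ℝ (y - x t ω) (g t ω - μ[g t|𝔉 (t - 1)] ω)

theorem stronglyMeasurable_innerNoise {𝔉 : Filtration ℕ m0} {y : E} {x g : ℕ → Ω → E} {t : ℕ}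
    (hx : StronglyMeasurable[𝔉 (t - 1)] (x t)) (hg : StronglyMeasurable[𝔉 t] (g t)) :
    StronglyMeasurable[𝔉 t] (innerNoise μ 𝔉 y x g t) :=
  ((stronglyMeasurable_const.sub hx).mono (𝔉.mono (Nat.sub_le t 1))).inner
    (hg.sub (stronglyMeasurable_condExp.mono (𝔉.mono (Nat.sub_le t 1))))

theorem abs_innerNoise_le {𝔉 : Filtration ℕ m0} {y : E} {x g : ℕ → Ω → E} {t : ℕ} {G : ℝ}
    (hg : ∀ᵐ ω ∂μ, ‖g t ω‖ ≤ G) (hγ : ∀ᵐ ω ∂μ, ‖μ[g t|𝔉 (t - 1)] ω‖ ≤ G) :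
    ∀ᵐ ω ∂μ, |innerNoise μ 𝔉 y x g t ω| ≤ 2 * G * ‖y - x t ω‖ := by
  filter_upwards [hg, hγ] with ω hgω hγω
  calc |innerNoise μ 𝔉 y x g t ω| ≤ ‖y - x t ω‖ * ‖g t ω - μ[g t|𝔉 (t - 1)] ω‖ :=
        abs_real_inner_le_norm _ _
    _ ≤ ‖y - x t ω‖ * (2 * G) := by gcongr; exact (norm_sub_le _ _).trans (by linarith)
    _ = 2 * G * ‖y - x t ω‖ := by ring

theorem measureReal_le_sum_innerNoise_le_exp_neg [CompleteSpace E] [IsProbabilityMeasure μ]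
    {𝔉 : Filtration ℕ m0} {y : E} {x g : ℕ → Ω → E} {n : ℕ} {R G : ℝ} (hG : 0 ≤ G)
    (hx : ∀ t, 1 ≤ t → t ≤ n → StronglyMeasurable[𝔉 (t - 1)] (x t))
    (hg : ∀ t, 1 ≤ t → t ≤ n → StronglyMeasurable[𝔉 t] (g t))
    (hgint : ∀ t, 1 ≤ t → t ≤ n → Integrable (g t) μ) (hxR : ∀ t ω, ‖y - x t ω‖ ≤ R)
    (hgG : ∀ t, 1 ≤ t → t ≤ n → ∀ᵐ ω ∂μ, ‖g t ω‖ ≤ G)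
    (hγG : ∀ t, 1 ≤ t → t ≤ n → ∀ᵐ ω ∂μ, ‖μ[g t|𝔉 (t - 1)] ω‖ ≤ G) (L l : ℝ) :
    μ.real {ω | L ≤ l * ∑ t ∈ Icc 1 n, innerNoise μ 𝔉 y x g t ω -
      l ^ 2 / 2 * (4 * G ^ 2 * ∑ t ∈ Icc 1 n, ‖x t ω - y‖ ^ 2)} ≤ exp (-L) := by
  have hV : ∀ ω, 4 * G ^ 2 * ∑ t ∈ Icc 1 n, ‖x t ω - y‖ ^ 2 =
      ∑ t ∈ Icc 1 n, (2 * G * ‖y - x t ω‖) ^ 2 := fun ω => by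
    rw [mul_sum]
    exact sum_congr rfl fun t _ => by rw [norm_sub_rev]; ring
  simp only [hV]
  exact measureReal_le_sum_sub_sum_sq_le_exp_neg (M := 2 * G * R)
    (fun t h1 h2 => stronglyMeasurable_innerNoise (hx t h1 h2) (hg t h1 h2))
    (fun t h1 h2 => (stronglyMeasurable_const.sub (hx t h1 h2)).norm.const_mul _)
    (fun t ω => by gcongr; exact hxR t ω)
    (fun t h1 h2 => abs_innerNoise_le (hgG t h1 h2) (hγG t h1 h2))
    (fun t h1 h2 => condExp_inner_sub_condExp_ae_eq_zero (𝔉.le _)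
      (stronglyMeasurable_const.sub (hx t h1 h2)) (ae_of_all _ (hxR t)) (hgint t h1 h2)) L l

theorem sum_innerNoise_ae_eq {𝔉 : Filtration ℕ m0} {y : E} {x g h : ℕ → Ω → E} {n : ℕ}
    (hcond : ∀ t, 1 ≤ t → t ≤ n → μ[g t|𝔉 (t - 1)] =ᵐ[μ] h t) :
    ∀ᵐ ω ∂μ, ∑ t ∈ Icc 1 n, innerNoise μ 𝔉 y x g t ω =
      ∑ t ∈ Icc 1 n, inner ℝ (y - x t ω) (g t ω - h t ω) := by
  have := (eventually_all_finset (Icc 1 n)).2 fun t ht =>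
    hcond t (mem_Icc.1 ht).1 (mem_Icc.1 ht).2
  filter_upwards [this] with ω hω
  exact sum_congr rfl fun t ht => by rw [innerNoise, hω t ht]

end

theorem one_sub_le_measureReal_add_measureReal [IsProbabilityMeasure μ] {A B : Set Ω} {ε : ℝ}
    (h : μ.real (Aᶜ ∩ Bᶜ) ≤ ε) : 1 - ε ≤ μ.real A + μ.real B := by
  have hcover : Set.univ ⊆ A ∪ B ∪ Aᶜ ∩ Bᶜ := fun ω _ => by
    by_cases hA : ω ∈ A <;> by_cases hB : ω ∈ B <;> simp [hA, hB]
  have h1 := measureReal_mono (μ := μ) hcover (measure_ne_top _ _)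
  have h2 := measureReal_union_le (μ := μ) (A ∪ B) (Aᶜ ∩ Bᶜ)
  have h3 := measureReal_union_le (μ := μ) A B
  rw [probReal_univ] at h1
  linarith

theorem sq_le_two_pow_ceil_two_mul_logb {x : ℝ} (hx : 0 < x) :
    x ^ 2 ≤ 2 ^ ⌈2 * logb 2 x⌉₊ := by
  calc x ^ 2 = (2 : ℝ) ^ (2 * logb 2 x) := by
        rw [mul_comm, rpow_mul zero_le_two, rpow_logb zero_lt_two (by norm_num) hx, rpow_two]
    _ ≤ (2 : ℝ) ^ (⌈2 * logb 2 x⌉₊ : ℝ) := rpow_le_rpow_of_exponent_le one_le_two (Nat.le_ceil _)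
    _ = 2 ^ ⌈2 * logb 2 x⌉₊ := rpow_natCast _ _

theorem one_le_ceil_two_mul_logb {x : ℝ} (hx : 1 < x) : 1 ≤ ⌈2 * logb 2 x⌉₊ := by
  rw [Nat.one_le_iff_ne_zero, ← pos_iff_ne_zero, Nat.ceil_pos]
  have := logb_pos one_lt_two hx
  positivity

theorem sum_norm_sub_sq_le {ι E : Type*} [SeminormedAddCommGroup E] {r : ℝ} {x : ι → E} {y : E}
    (hx : ∀ t, ‖x t‖ ≤ r) (hy : ‖y‖ ≤ r) (s : Finset ι) :
    ∑ t ∈ s, ‖x t - y‖ ^ 2 ≤ 4 * r ^ 2 * s.card := by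
  calc ∑ t ∈ s, ‖x t - y‖ ^ 2 ≤ ∑ _t ∈ s, (2 * r) ^ 2 := by
        gcongr with t
        exact (norm_sub_le _ _).trans (by linarith [hx t])
    _ = 4 * r ^ 2 * s.card := by rw [sum_const, nsmul_eq_mul]; ring

theorem peeling_window_of_lt {r G D Λ L κ : ℝ} {T m : ℕ} (hG : 0 < G) (hT : 0 < T) (hκ : 0 ≤ κ)
    (hTm : (T : ℝ) ^ 2 ≤ 2 ^ m) (hD : 4 * r ^ 2 / T < D) (hDT : D ≤ 4 * r ^ 2 * T)
    (hΛ : 4 * G * √(D * L) + κ < Λ) :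
    16 * G ^ 2 * r ^ 2 / T < 4 * G ^ 2 * D ∧ 4 * G ^ 2 * D ≤ 2 ^ m * (16 * G ^ 2 * r ^ 2 / T) ∧
      √(4 * (4 * G ^ 2 * D) * L) < Λ := by
  have hT' : (0 : ℝ) < T := by exact_mod_cast hT
  refine ⟨?_, ?_, ?_⟩
  · rw [show 16 * G ^ 2 * r ^ 2 / T = 4 * G ^ 2 * (4 * r ^ 2 / T) by ring]
    gcongr
  · calc 4 * G ^ 2 * D ≤ 4 * G ^ 2 * (4 * r ^ 2 * T) := by gcongr
      _ = (T : ℝ) ^ 2 * (16 * G ^ 2 * r ^ 2 / T) := by field_simp; ring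
      _ ≤ 2 ^ m * (16 * G ^ 2 * r ^ 2 / T) := by gcongr
  · rw [show 4 * (4 * G ^ 2 * D) * L = (4 * G) ^ 2 * (D * L) by ring, sqrt_mul (sq_nonneg _),
      sqrt_sq (by positivity)]
    linarith

end

theorem stmt_6_general {d : ℕ} {Ω : Type*} {m0 : MeasurableSpace Ω}
    (P : Measure Ω) [IsProbabilityMeasure P] (𝔉 : MeasureTheory.Filtration ℕ m0)
    (r G₁ : ℝ) (hr : 0 < r) (hG₁ : 0 < G₁)
    (T : ℕ)
    (f : EuclideanSpace ℝ (Fin d) → ℝ)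
    (x g : ℕ → Ω → EuclideanSpace ℝ (Fin d))
    (xfix : EuclideanSpace ℝ (Fin d)) (hxfix : ‖xfix‖ ≤ r)
    (hxB : ∀ t ω, ‖x t ω‖ ≤ r)
    (hxmeas : ∀ t, 1 ≤ t → t ≤ T → StronglyMeasurable[𝔉 (t - 1)] (x t))
    (hgmeas : ∀ t, 1 ≤ t → t ≤ T → StronglyMeasurable[𝔉 t] (g t))
    (hgint : ∀ t, 1 ≤ t → t ≤ T → Integrable (g t) P)
    (hcond : ∀ t, 1 ≤ t → t ≤ T →
      P[g t | 𝔉 (t - 1)] =ᵐ[P] fun ω => gradient f (x t ω))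
    (hgbdd : ∀ t, 1 ≤ t → t ≤ T → ∀ᵐ ω ∂P, ‖g t ω‖ ≤ G₁)
    (hgradbdd : ∀ t, 1 ≤ t → t ≤ T → ∀ᵐ ω ∂P, ‖gradient f (x t ω)‖ ≤ G₁)
    (ε : ℝ) (hε : 0 < ε) (hε1 : ε < 1)
    (m : ℕ) (hm : m = ⌈2 * Real.logb 2 (T : ℝ)⌉₊)
    (DT LT : Ω → ℝ)
    (hDT : ∀ ω, DT ω = ∑ t ∈ Finset.Icc 1 T, ‖x t ω - xfix‖ ^ 2)
    (hLT : ∀ ω, LT ω =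
      ∑ t ∈ Finset.Icc 1 T, (inner ℝ (xfix - x t ω) (g t ω - gradient f (x t ω)) : ℝ)) :
    1 - ε ≤ (P {ω | DT ω ≤ 4 * r ^ 2 / T}).toReal +
      (P {ω | LT ω ≤ 4 * G₁ * Real.sqrt (DT ω * Real.log (m / ε)) +
        4 * Real.sqrt 2 / 3 * G₁ * Real.log (m / ε)}).toReal := by
  have hDT_le : ∀ ω, DT ω ≤ 4 * r ^ 2 * T := fun ω => by
    simpa [hDT] using sum_norm_sub_sq_le (hxB · ω) hxfix (Icc 1 T)
  refine one_sub_le_measureReal_add_measureReal ?_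
  rcases le_or_gt T 1 with hT1 | hT2
  · -- here `D_T ≤ 4 r² T ≤ 4 r² / T`, so the first event is certain
    suffices {ω | DT ω ≤ 4 * r ^ 2 / T}ᶜ = ∅ by simp [this, hε.le]
    refine Set.compl_empty_iff.2 (Set.eq_univ_of_forall fun ω => ?_)
    have := hDT_le ω
    interval_cases T <;> simpa using this
  have hm1 : (1 : ℝ) ≤ m := by
    exact_mod_cast hm ▸ one_le_ceil_two_mul_logb (by exact_mod_cast hT2)
  have hL : 0 ≤ log (m / ε) := log_nonneg ((one_le_div hε).2 (by linarith))
  have hpeel := measureReal_peeling_le (μ := P)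
    (Λ := fun ω => ∑ t ∈ Icc 1 T, innerNoise P 𝔉 xfix x g t ω)
    (V := fun ω => 4 * G₁ ^ 2 * DT ω) (a := 16 * G₁ ^ 2 * r ^ 2 / T) (by positivity) hL m
    fun l _ => by
      simpa only [← hDT] using measureReal_le_sum_innerNoise_le_exp_neg hG₁.le hxmeas hgmeas
        hgint (fun t ω => (norm_sub_le _ _).trans (add_le_add hxfix (hxB t ω)))
        hgbdd (fun t h1 h2 => by
          filter_upwards [hcond t h1 h2, hgradbdd t h1 h2] with ω h hω
          rwa [h]) _ l
  refine (ENNReal.toReal_mono (measure_ne_top _ _) (measure_mono_ae ?_)).trans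
    (hpeel.trans_eq ?_)
  · filter_upwards [sum_innerNoise_ae_eq (y := xfix) (x := x) hcond] with ω hω
    rintro ⟨hA, hB⟩
    simp only [Set.mem_compl_iff, Set.mem_ofPred_eq, not_le, hLT, ← hω] at hA hB
    exact peeling_window_of_lt hG₁ (by omega) (by positivity)
      (hm ▸ sq_le_two_pow_ceil_two_mul_logb (by positivity)) hA (hDT_le ω) hB
  · rw [exp_neg, exp_log (by positivity)]
    field_simp

/-- for a fixed `x` in the ball `B = {x : ‖x‖ ≤ r}` and iterates `x_t ∈ B` with
stochastic gradients `g̃_t` satisfying `E[g̃_t | 𝔉_{t-1}] = ∇f(x_t)` and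
`‖g̃_t‖, ‖∇f(x_t)‖ ≤ G₁` a.s., with `D_T = ∑_t ‖x_t - x‖²`,
`Λ_T = ∑_t ⟨x - x_t, g̃_t - ∇f(x_t)⟩` and `m = ⌈2 log₂ T⌉`:
`ℙ(D_T ≤ 4r²/T) + ℙ(Λ_T ≤ 4G₁√(D_T ln(m/ε)) + (4√2/3)G₁ ln(m/ε)) ≥ 1 - ε`. -/
theorem stmt_6 {d : ℕ} {Ω : Type*} {m0 : MeasurableSpace Ω}
    (P : Measure Ω) [IsProbabilityMeasure P] (𝔉 : MeasureTheory.Filtration ℕ m0)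
    (r G₁ : ℝ) (hr : 0 < r) (hG₁ : 0 < G₁)
    (T : ℕ) (hT : 1 ≤ T)
    (f : EuclideanSpace ℝ (Fin d) → ℝ)
    (x g : ℕ → Ω → EuclideanSpace ℝ (Fin d))
    (xfix : EuclideanSpace ℝ (Fin d)) (hxfix : ‖xfix‖ ≤ r)
    (hxB : ∀ t ω, ‖x t ω‖ ≤ r)
    (hxmeas : ∀ t, 1 ≤ t → t ≤ T → StronglyMeasurable[𝔉 (t - 1)] (x t))
    (hgmeas : ∀ t, 1 ≤ t → t ≤ T → StronglyMeasurable[𝔉 t] (g t))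
    (hgint : ∀ t, 1 ≤ t → t ≤ T → Integrable (g t) P)
    (hcond : ∀ t, 1 ≤ t → t ≤ T →
      P[g t | 𝔉 (t - 1)] =ᵐ[P] fun ω => gradient f (x t ω))
    (hgbdd : ∀ t, 1 ≤ t → t ≤ T → ∀ᵐ ω ∂P, ‖g t ω‖ ≤ G₁)
    (hgradbdd : ∀ t, 1 ≤ t → t ≤ T → ∀ᵐ ω ∂P, ‖gradient f (x t ω)‖ ≤ G₁)
    (ε : ℝ) (hε : 0 < ε) (hε1 : ε < 1)
    (m : ℕ) (hm : m = ⌈2 * Real.logb 2 (T : ℝ)⌉₊)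
    (DT LT : Ω → ℝ)
    (hDT : ∀ ω, DT ω = ∑ t ∈ Finset.Icc 1 T, ‖x t ω - xfix‖ ^ 2)
    (hLT : ∀ ω, LT ω =
      ∑ t ∈ Finset.Icc 1 T, (inner ℝ (xfix - x t ω) (g t ω - gradient f (x t ω)) : ℝ)) :
    1 - ε ≤ (P {ω | DT ω ≤ 4 * r ^ 2 / T}).toReal +
      (P {ω | LT ω ≤ 4 * G₁ * Real.sqrt (DT ω * Real.log (m / ε)) +
        4 * Real.sqrt 2 / 3 * G₁ * Real.log (m / ε)}).toReal :=
  stmt_6_general P 𝔉 r G₁ hr hG₁ T f x g xfix hxfix hxB hxmeas hgmeas hgint hcond hgbdd hgradbdd ε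
    hε hε1 m hm DT LT hDT hLT
end

section
/- Let c : ℝ^d → ℝ be convex and differentiable with ‖∇c(x)‖₂ ≥ ρ > 0 whenever c(x) = 0, suppose there exists x₀ with c(x₀) < 0, let x̂ satisfy c(x̂) > 0, and let x̃ be the Euclidean projection of x̂ onto {x : c(x) ≤ 0}. Then c(x̂) ≥ ρ ‖x̂ − x̃‖₂. -/
/-!
At the projection `x̃` the constraint is active: if `c x̃ < 0`, convexity makes a point of the
segment `[x̃, x̂]` feasible and strictly closer to `x̂`. The residual `x̂ - x̃` lies in the normal
cone of the feasible set at `x̃`, and every direction of strict descent of `c` at `x̃` enters the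
feasible set, so `x̂ - x̃` is a nonnegative multiple of `∇c(x̃)`, i.e.
`⟪∇c(x̃), x̂ - x̃⟫ = ‖∇c(x̃)‖ ‖x̂ - x̃‖`. The gradient inequality of convex functions then gives
`c x̂ ≥ ⟪∇c(x̃), x̂ - x̃⟫ ≥ ρ ‖x̂ - x̃‖`.
-/

open Filter Set Topology
open scoped RealInnerProductSpace

theorem HasDerivAt.eventually_lt_of_neg {φ : ℝ → ℝ} {φ' a : ℝ} (h : HasDerivAt φ φ' a)
    (hφ' : φ' < 0) : ∀ᶠ t in 𝓝[>] a, φ t < φ a := by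
  have hslope : Tendsto (slope φ a) (𝓝[>] a) (𝓝 φ') :=
    (hasDerivAt_iff_tendsto_slope.mp h).mono_left (nhdsWithin_mono _ fun _ ht => ne_of_gt ht)
  filter_upwards [hslope.eventually_lt_const hφ', self_mem_nhdsWithin] with t hneg (ht : a < t)
  rw [slope_def_field, div_neg_iff] at hneg
  rcases hneg with ⟨-, hta⟩ | ⟨hφ, -⟩ <;> linarith

theorem IsMinOn.real_inner_sub_le_zero {F : Type*} [NormedAddCommGroup F] [InnerProductSpace ℝ F]
    {K : Set F} (hK : Convex ℝ K) {u v : F} (hv : v ∈ K) (hmin : IsMinOn (fun w => ‖u - w‖) K v) :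
    ∀ w ∈ K, ⟪u - v, w - v⟫ ≤ 0 :=
  (norm_eq_iInf_iff_real_inner_le_zero hK hv).1 (hmin.iInf_eq hv).symm

theorem ConvexOn.eq_zero_of_isMinOn_norm_sub {F : Type*} [NormedAddCommGroup F] [NormedSpace ℝ F]
    {c : F → ℝ} (hconv : ConvexOn ℝ univ c) {x y : F} (hx : 0 < c x) (hy : c y ≤ 0)
    (hmin : IsMinOn (fun w => ‖x - w‖) {w | c w ≤ 0} y) : c y = 0 := by
  by_contra hne
  have hy' : c y < 0 := lt_of_le_of_ne hy hne
  set t := c y / (c y - c x) with ht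
  have ht0 : 0 < t := div_pos_of_neg_of_neg hy' (by linarith)
  have ht1 : t < 1 := (div_lt_one_of_neg (by linarith)).2 (by linarith)
  have hfeas : c ((1 - t) • y + t • x) ≤ 0 := by
    have hcomb : (1 - t) * c y + t * c x = 0 := by
      rw [ht]; field_simp [(by linarith : c y - c x < 0).ne]; ring
    simpa only [smul_eq_mul, hcomb] using
      hconv.2 (mem_univ y) (mem_univ x) (by linarith) ht0.le (sub_add_cancel 1 t)
  have hcloser : ‖x - ((1 - t) • y + t • x)‖ = (1 - t) * ‖x - y‖ := by
    rw [show x - ((1 - t) • y + t • x) = (1 - t) • (x - y) by module, norm_smul,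
      Real.norm_of_nonneg (by linarith)]
  have hxy : 0 < ‖x - y‖ := norm_pos_iff.2 (sub_ne_zero.2 fun h => by rw [h] at hx; linarith)
  have := hmin hfeas
  simp only [mem_ofPred_eq, hcloser] at this
  linarith [mul_pos ht0 hxy]

section Gradient

variable {E : Type*} [NormedAddCommGroup E] [InnerProductSpace ℝ E] [CompleteSpace E]
  {f : E → ℝ} {g x : E}

theorem HasGradientAt.hasDerivAt_add_smul (hf : HasGradientAt f g x) (z : E) :
    HasDerivAt (fun t : ℝ => f (x + t • z)) ⟪g, z⟫ 0 := by
  have hline : HasDerivAt (fun t : ℝ => x + t • z) z 0 := by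
    simpa using ((hasDerivAt_id (0 : ℝ)).smul_const z).const_add x
  exact hf.hasFDerivAt.comp_hasDerivAt_of_eq 0 hline (by simp)

theorem ConvexOn.inner_le_sub_of_hasGradientAt (hconv : ConvexOn ℝ univ f)
    (hf : HasGradientAt f g x) (y : E) : ⟪g, y - x⟫ ≤ f y - f x := by
  have hline : ConvexOn ℝ univ fun t : ℝ => f (x + t • (y - x)) := by
    have hcomp : (fun t : ℝ => f (x + t • (y - x))) = f ∘ AffineMap.lineMap x y := by
      funext t
      simp [AffineMap.lineMap_apply_module', add_comm]
    simpa [hcomp] using hconv.comp_affineMap (AffineMap.lineMap x y)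
  simpa [slope_def_field] using
    hline.le_slope_of_hasDerivAt (mem_univ 0) (mem_univ 1) zero_lt_one
      (hf.hasDerivAt_add_smul (y - x))

theorem HasGradientAt.real_inner_nonpos_of_inner_neg {v : E} (hf : HasGradientAt f g x)
    (hnormal : ∀ y, f y ≤ f x → ⟪v, y - x⟫ ≤ 0) {z : E} (hz : ⟪g, z⟫ < 0) :
    ⟪v, z⟫ ≤ 0 := by
  obtain ⟨t, hdescent, ht : 0 < t⟩ :=
    (((hf.hasDerivAt_add_smul z).eventually_lt_of_neg hz).and self_mem_nhdsWithin).exists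
  have := hnormal _ (by simpa using hdescent.le)
  rw [add_sub_cancel_left, real_inner_smul_right] at this
  exact nonpos_of_mul_nonpos_right this ht

end Gradient

theorem norm_mul_norm_le_real_inner_of_forall_inner_neg {F : Type*} [NormedAddCommGroup F]
    [InnerProductSpace ℝ F] {g v : F} (h : ∀ z, ⟪g, z⟫ < 0 → ⟪v, z⟫ ≤ 0) :
    ‖g‖ * ‖v‖ ≤ ⟪g, v⟫ := by
  by_contra! hlt
  have hpos : 0 < ‖g‖ * ‖v‖ := by linarith [neg_le_of_abs_le (abs_real_inner_le_norm g v)]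
  have hg : 0 < ‖g‖ := pos_of_mul_pos_left hpos (norm_nonneg v)
  have hv : 0 < ‖v‖ := pos_of_mul_pos_right hpos (norm_nonneg g)
  -- `z` descends strictly along `g` but ascends strictly along `v`.
  set z := ‖g‖ • v - ‖v‖ • g
  have hgz : ⟪g, z⟫ = ‖g‖ * (⟪g, v⟫ - ‖g‖ * ‖v‖) := by
    simp only [z, inner_sub_right, real_inner_smul_right, real_inner_self_eq_norm_sq]; ring
  have hvz : ⟪v, z⟫ = ‖v‖ * (‖g‖ * ‖v‖ - ⟪g, v⟫) := by
    simp only [z, inner_sub_right, real_inner_smul_right, real_inner_self_eq_norm_sq,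
      real_inner_comm g v]; ring
  have := h z (by rw [hgz]; exact mul_neg_of_pos_of_neg hg (by linarith))
  rw [hvz] at this
  linarith [mul_pos hv (sub_pos.2 hlt)]

theorem stmt_11_general {d : ℕ} (ρ : ℝ)
    (c : EuclideanSpace ℝ (Fin d) → ℝ)
    (hconv : ConvexOn ℝ Set.univ c) (hdiff : Differentiable ℝ c)
    (hgrad : ∀ x : EuclideanSpace ℝ (Fin d), c x = 0 → ρ ≤ ‖gradient c x‖)
    (xhat : EuclideanSpace ℝ (Fin d)) (hxhat : 0 < c xhat)
    (xtilde : EuclideanSpace ℝ (Fin d))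
    (hfeas : c xtilde ≤ 0)
    (hproj : ∀ y : EuclideanSpace ℝ (Fin d), c y ≤ 0 → ‖xtilde - xhat‖ ≤ ‖y - xhat‖) :
    ρ * ‖xhat - xtilde‖ ≤ c xhat := by
  have hmin : IsMinOn (fun y => ‖xhat - y‖) {y | c y ≤ 0} xtilde := isMinOn_iff.2 fun y hy => by
    simpa only [norm_sub_rev xhat] using hproj y hy
  have hactive : c xtilde = 0 := hconv.eq_zero_of_isMinOn_norm_sub hxhat hfeas hmin
  have hgradient : HasGradientAt c (gradient c xtilde) xtilde := (hdiff xtilde).hasGradientAt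
  have hK : Convex ℝ {y | c y ≤ 0} := by simpa using hconv.convex_le 0
  have hnormal : ∀ y, c y ≤ c xtilde → ⟪xhat - xtilde, y - xtilde⟫ ≤ 0 := fun y hy =>
    hmin.real_inner_sub_le_zero hK hfeas y (hactive ▸ hy)
  calc ρ * ‖xhat - xtilde‖ ≤ ‖gradient c xtilde‖ * ‖xhat - xtilde‖ :=
        mul_le_mul_of_nonneg_right (hgrad xtilde hactive) (norm_nonneg _)
    _ ≤ ⟪gradient c xtilde, xhat - xtilde⟫ := norm_mul_norm_le_real_inner_of_forall_inner_neg
        fun _ => hgradient.real_inner_nonpos_of_inner_neg hnormal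
    _ ≤ c xhat - c xtilde := hconv.inner_le_sub_of_hasGradientAt hgradient xhat
    _ = c xhat := by rw [hactive, sub_zero]

/-- if `c` is convex and differentiable with `‖∇c(x)‖ ≥ ρ > 0` whenever
`c(x) = 0`, there is a strictly feasible point, `c(x̂) > 0`, and `x̃` is the Euclidean
projection of `x̂` onto `{x : c(x) ≤ 0}`, then `c(x̂) ≥ ρ ‖x̂ - x̃‖`. -/
theorem stmt_11 {d : ℕ} (ρ : ℝ) (hρ : 0 < ρ)
    (c : EuclideanSpace ℝ (Fin d) → ℝ)
    (hconv : ConvexOn ℝ Set.univ c) (hdiff : Differentiable ℝ c)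
    (hgrad : ∀ x : EuclideanSpace ℝ (Fin d), c x = 0 → ρ ≤ ‖gradient c x‖)
    (x₀ : EuclideanSpace ℝ (Fin d)) (hx₀ : c x₀ < 0)
    (xhat : EuclideanSpace ℝ (Fin d)) (hxhat : 0 < c xhat)
    (xtilde : EuclideanSpace ℝ (Fin d))
    (hfeas : c xtilde ≤ 0)
    (hproj : ∀ y : EuclideanSpace ℝ (Fin d), c y ≤ 0 → ‖xtilde - xhat‖ ≤ ‖y - xhat‖) :
    ρ * ‖xhat - xtilde‖ ≤ c xhat :=
  stmt_11_general ρ c hconv hdiff hgrad xhat hxhat xtilde hfeas hproj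
end

section
/- Let β, μ, G > 0 and define η_k = μ/(2^k β), T_k = 2^{k+2}, and V_k = μ²G²/(2^{k−2}β) for k ≥ 1. If a nonnegative sequence (a_k) satisfies a₁ ≤ V₁ and a_{k+1} ≤ μ η_k G² + μ a_k/(η_k T_k β) for all k ≥ 1, then a_k ≤ V_k for all k ≥ 1; in particular a_{k+1} ≤ V_k/2 whenever a_k ≤ V_k. -/
open scoped BigOperators

/-- the epoch-wise induction at the core of the Epro-SGD convergence proof.
With `η_k = μ/(2^k β)`, `T_k = 2^{k+2}` and `V_k = μ²G²/(2^{k-2} β)`, a nonnegative sequence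
`a` with `a 1 ≤ V 1` and `a_{k+1} ≤ μ η_k G² + μ a_k/(η_k T_k β)` satisfies `a_k ≤ V_k` for
all `k ≥ 1`; in particular `a_{k+1} ≤ V_k / 2` whenever `a_k ≤ V_k`. -/
theorem stmt_13 (β μ G : ℝ) (hβ : 0 < β) (hμ : 0 < μ) (hG : 0 < G)
    (η T V a : ℕ → ℝ)
    (hη : ∀ k, 1 ≤ k → η k = μ / (2 ^ k * β))
    (hT : ∀ k, 1 ≤ k → T k = 2 ^ (k + 2))
    (hV : ∀ k, 1 ≤ k → V k = μ ^ 2 * G ^ 2 / ((2 : ℝ) ^ ((k : ℤ) - 2) * β))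
    (ha : ∀ k, 0 ≤ a k)
    (ha1 : a 1 ≤ V 1)
    (hrec : ∀ k, 1 ≤ k → a (k + 1) ≤ μ * η k * G ^ 2 + μ * a k / (η k * T k * β)) :
    (∀ k, 1 ≤ k → a k ≤ V k) ∧
    (∀ k, 1 ≤ k → a k ≤ V k → a (k + 1) ≤ V k / 2) := by
  have h2k : ∀ k : ℕ, (2 : ℝ) ^ ((k : ℤ) - 2) = 2 ^ k / 4 := by
    intro k
    rw [zpow_sub₀ (by norm_num : (2:ℝ) ≠ 0), zpow_natCast]
    norm_num
  have hkey : ∀ k, 1 ≤ k → a (k + 1) ≤ V k / 4 + a k / 4 := by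
    intro k hk
    have h := hrec k hk
    rw [hη k hk, hT k hk] at h
    have hpow : (0:ℝ) < 2 ^ k := by positivity
    have e1 : μ * (μ / (2 ^ k * β)) * G ^ 2 = V k / 4 := by
      rw [hV k hk, h2k k]; field_simp
    have e2 : μ * a k / (μ / (2 ^ k * β) * 2 ^ (k + 2) * β) = a k / 4 := by
      rw [pow_succ, pow_succ]
      field_simp
      ring
    rw [e1, e2] at h
    exact h
  have hVhalf : ∀ k, 1 ≤ k → V (k + 1) = V k / 2 := by
    intro k hk
    rw [hV k hk, hV (k+1) (by omega), h2k k, h2k (k+1), pow_succ]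
    have hpow : (0:ℝ) < 2 ^ k := by positivity
    field_simp
    ring
  have hmain : ∀ k, 1 ≤ k → a k ≤ V k := by
    intro k hk
    induction k with
    | zero => omega
    | succ n ih =>
      rcases Nat.eq_or_lt_of_le hk with h1 | h1
      · simpa [← h1] using ha1
      · have hn : 1 ≤ n := by omega
        have := hkey n hn
        have hVn := ih hn
        rw [hVhalf n hn]
        linarith
  refine ⟨hmain, fun k hk hak => ?_⟩
  have := hkey k hk
  linarith
end

section
/- Let B = {x ∈ ℝ^d : ‖x‖₂ ≤ r}, let η, μ₂ ≥ 0, μ₁ ≥ 0, and z ∈ ℝ^d. Then the unique minimizer over B of x ↦ (1/2)‖x − z‖₂² + η( (μ₁/2)‖x‖₂² + μ₂‖x‖₁ ) is x⁺ = P_B[ (1/(ημ₁+1)) · sign(z) ∘ [|z| − ημ₂]₊ ], where |z| = (|z₁|, ..., |z_d|), sign(z) = (sign(z₁), ..., sign(z_d)), [·]₊ is the componentwise positive part, ∘ denotes the elementwise product, and P_B[y] = (r/max(‖y‖₂, r)) y is the Euclidean projection onto B. -/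
/-!
Put `a = ημ₁ + 1`, let `s` be the soft-thresholded `z` (so `w = s / a`) and `φ = ημ₂‖·‖₁`.
Coordinatewise, `z - s` is a subgradient of `φ` at `s`, and the subgradient inequality
`⟪x, z - s⟫ ≤ φ x` is an equality along the whole ray `ℝ₊ s`. Hence the objective equals
`(a/2)‖x - w‖²` plus a constant plus a nonnegative defect that vanishes on the ray, where `x⁺`
lies. The radial projection `x⁺` of `w` onto the ball satisfies `⟪w - x⁺, x - x⁺⟫ ≤ 0`, so the
objective at `x` exceeds its value at `x⁺` by at least `(a/2)‖x - x⁺‖²`: this gives minimality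
and uniqueness at once.
-/

open scoped RealInnerProductSpace

noncomputable def softThreshold (c x : ℝ) : ℝ := Real.sign x * max (|x| - c) 0

lemma softThreshold_cases {c : ℝ} (hc : 0 ≤ c) (x : ℝ) :
    (|x| ≤ c ∧ softThreshold c x = 0) ∨ (c < x ∧ softThreshold c x = x - c) ∨
      (x < -c ∧ softThreshold c x = x + c) := by
  unfold softThreshold
  rcases le_or_gt |x| c with h | h
  · exact Or.inl ⟨h, by rw [max_eq_right (by linarith), mul_zero]⟩
  rw [max_eq_left (by linarith)]
  rcases lt_abs.mp h with h' | h'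
  · have hx : 0 < x := by linarith
    exact Or.inr (Or.inl ⟨h', by rw [Real.sign_of_pos hx, abs_of_pos hx]; ring⟩)
  · have hx : x < 0 := by linarith
    exact Or.inr (Or.inr ⟨by linarith, by rw [Real.sign_of_neg hx, abs_of_neg hx]; ring⟩)

lemma mul_sub_softThreshold_le {c : ℝ} (hc : 0 ≤ c) (x z : ℝ) :
    x * (z - softThreshold c z) ≤ c * |x| := by
  rcases softThreshold_cases hc z with ⟨h, hs⟩ | ⟨h, hs⟩ | ⟨h, hs⟩ <;> rw [hs]
  · calc x * (z - 0) ≤ |x| * |z| := by rw [sub_zero, ← abs_mul]; exact le_abs_self _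
      _ ≤ c * |x| := by rw [mul_comm]; exact mul_le_mul_of_nonneg_right h (abs_nonneg x)
  · nlinarith [le_abs_self x]
  · nlinarith [neg_abs_le x]

lemma softThreshold_mul_sub {c : ℝ} (hc : 0 ≤ c) (z : ℝ) :
    softThreshold c z * (z - softThreshold c z) = c * |softThreshold c z| := by
  rcases softThreshold_cases hc z with ⟨h, hs⟩ | ⟨h, hs⟩ | ⟨h, hs⟩ <;> rw [hs]
  · simp
  · rw [abs_of_pos (by linarith)]; ring
  · rw [abs_of_neg (by linarith)]; ring

section Ball

variable {E : Type*} [NormedAddCommGroup E] [InnerProductSpace ℝ E]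

noncomputable def ballProj (r : ℝ) (w : E) : E := (r / max ‖w‖ r) • w

lemma norm_ballProj_le {r : ℝ} (hr : 0 < r) (w : E) : ‖ballProj r w‖ ≤ r := by
  have hm : 0 < max ‖w‖ r := lt_max_of_lt_right hr
  rw [ballProj, norm_smul, Real.norm_eq_abs, abs_of_pos (div_pos hr hm), div_mul_eq_mul_div,
    div_le_iff₀ hm]
  exact mul_le_mul_of_nonneg_left (le_max_left _ _) hr.le

lemma inner_sub_ballProj_nonpos {r : ℝ} (hr : 0 < r) (w : E) {x : E} (hx : ‖x‖ ≤ r) :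
    ⟪w - ballProj r w, x - ballProj r w⟫ ≤ 0 := by
  set t := r / max ‖w‖ r
  -- either `w` lies in the ball and `t = 1`, or `t • w` lies on the sphere
  have ht : (1 - t) * (r - t * ‖w‖) = 0 := by
    rcases le_total ‖w‖ r with h | h
    · simp [t, max_eq_right h, div_self hr.ne']
    · have hw : 0 < ‖w‖ := hr.trans_le h
      simp [t, max_eq_left h, div_mul_cancel₀ r hw.ne']
  have ht1 : t ≤ 1 := div_le_one_of_le₀ (le_max_right _ _) (lt_max_of_lt_right hr).le
  calc ⟪w - ballProj r w, x - ballProj r w⟫ = (1 - t) * (⟪w, x⟫ - t * ‖w‖ ^ 2) := by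
        have hw : w - ballProj r w = (1 - t) • w := by rw [sub_smul, one_smul]; rfl
        rw [hw, ballProj, real_inner_smul_left, inner_sub_right, real_inner_smul_right,
          real_inner_self_eq_norm_sq]
      _ ≤ (1 - t) * (‖w‖ * r - t * ‖w‖ ^ 2) := by
        gcongr
        exact (real_inner_le_norm w x).trans (mul_le_mul_of_nonneg_left hx (norm_nonneg w))
      _ = ‖w‖ * ((1 - t) * (r - t * ‖w‖)) := by ring
      _ = 0 := by rw [ht, mul_zero]

end Ball

section L1Subgradient

variable {ι : Type*} [Fintype ι] {c : ℝ} {z s : EuclideanSpace ℝ ι}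

lemma inner_sub_softThreshold_le (hc : 0 ≤ c) (hs : ∀ i, s i = softThreshold c (z i))
    (x : EuclideanSpace ℝ ι) : ⟪x, z - s⟫ ≤ c * ∑ i, |x i| := by
  simp only [PiLp.inner_apply, PiLp.sub_apply, RCLike.inner_apply, conj_trivial, Finset.mul_sum]
  refine Finset.sum_le_sum fun i _ => ?_
  rw [mul_comm, hs]
  exact mul_sub_softThreshold_le hc _ _

lemma mul_sum_abs_smul_softThreshold (hc : 0 ≤ c) (hs : ∀ i, s i = softThreshold c (z i))
    {k : ℝ} (hk : 0 ≤ k) : c * ∑ i, |(k • s) i| = ⟪k • s, z - s⟫ := by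
  simp only [PiLp.inner_apply, PiLp.sub_apply, PiLp.smul_apply, RCLike.inner_apply,
    conj_trivial, Finset.mul_sum, smul_eq_mul, abs_mul, abs_of_nonneg hk]
  refine Finset.sum_congr rfl fun i _ => ?_
  rw [hs, mul_left_comm, ← softThreshold_mul_sub hc]
  ring

end L1Subgradient

section Prox

variable {E : Type*} [NormedAddCommGroup E] [InnerProductSpace ℝ E]

lemma prox_objective_add_le {a : ℝ} (ha : 0 ≤ a) {φ : E → ℝ} {x z w p : E}
    (hx : ⟪x, z - a • w⟫ ≤ φ x) (hp : φ p = ⟪p, z - a • w⟫) (hproj : ⟪w - p, x - p⟫ ≤ 0) :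
    1 / 2 * ‖p - z‖ ^ 2 + (a - 1) / 2 * ‖p‖ ^ 2 + φ p + a / 2 * ‖x - p‖ ^ 2 ≤
      1 / 2 * ‖x - z‖ ^ 2 + (a - 1) / 2 * ‖x‖ ^ 2 + φ x := by
  have hproj' := mul_le_mul_of_nonneg_left hproj ha
  simp only [norm_sub_sq_real, inner_sub_left, inner_sub_right, real_inner_smul_right,
    real_inner_self_eq_norm_sq, real_inner_comm x w, real_inner_comm p w, real_inner_comm x p]
    at hx hp hproj' ⊢
  linarith

end Prox

/-- the unique minimizer over the ball `B = {x : ‖x‖ ≤ r}` of the elastic-net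
proximal objective `x ↦ (1/2)‖x - z‖² + η((μ₁/2)‖x‖² + μ₂‖x‖₁)` is obtained by
soft-thresholding `z` by `ημ₂`, scaling by `1/(ημ₁+1)`, and projecting onto `B` via
`P_B[y] = (r / max ‖y‖ r) • y`. -/
theorem stmt_15 {d : ℕ} (r η μ₁ μ₂ : ℝ) (hr : 0 < r)
    (hη : 0 ≤ η) (hμ₁ : 0 ≤ μ₁) (hμ₂ : 0 ≤ μ₂)
    (z w xplus : EuclideanSpace ℝ (Fin d))
    (hw : ∀ i : Fin d, w i = (1 / (η * μ₁ + 1)) * (Real.sign (z i) * max (|z i| - η * μ₂) 0))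
    (hxplus : xplus = (r / max ‖w‖ r) • w) :
    ‖xplus‖ ≤ r ∧
    (∀ x : EuclideanSpace ℝ (Fin d), ‖x‖ ≤ r →
      (1 / 2) * ‖xplus - z‖ ^ 2 + η * ((μ₁ / 2) * ‖xplus‖ ^ 2 + μ₂ * ∑ i, |xplus i|) ≤
        (1 / 2) * ‖x - z‖ ^ 2 + η * ((μ₁ / 2) * ‖x‖ ^ 2 + μ₂ * ∑ i, |x i|)) ∧
    (∀ x : EuclideanSpace ℝ (Fin d), ‖x‖ ≤ r →
      (1 / 2) * ‖x - z‖ ^ 2 + η * ((μ₁ / 2) * ‖x‖ ^ 2 + μ₂ * ∑ i, |x i|) =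
        (1 / 2) * ‖xplus - z‖ ^ 2 + η * ((μ₁ / 2) * ‖xplus‖ ^ 2 + μ₂ * ∑ i, |xplus i|) →
      x = xplus) := by
  have ha : 0 < η * μ₁ + 1 := by positivity
  have hc : 0 ≤ η * μ₂ := mul_nonneg hη hμ₂
  have hs : ∀ i, ((η * μ₁ + 1) • w) i = softThreshold (η * μ₂) (z i) := fun i => by
    rw [PiLp.smul_apply, smul_eq_mul, hw i, one_div, mul_inv_cancel_left₀ ha.ne', softThreshold]
  have hray : xplus = (r / max ‖w‖ r / (η * μ₁ + 1)) • ((η * μ₁ + 1) • w) := by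
    rw [hxplus, smul_smul, div_mul_cancel₀ _ ha.ne']
  have key : ∀ x : EuclideanSpace ℝ (Fin d), ‖x‖ ≤ r →
      (1 / 2) * ‖xplus - z‖ ^ 2 + η * ((μ₁ / 2) * ‖xplus‖ ^ 2 + μ₂ * ∑ i, |xplus i|) +
          (η * μ₁ + 1) / 2 * ‖x - xplus‖ ^ 2 ≤
        (1 / 2) * ‖x - z‖ ^ 2 + η * ((μ₁ / 2) * ‖x‖ ^ 2 + μ₂ * ∑ i, |x i|) := by
    intro x hx
    have := prox_objective_add_le (w := w) (p := xplus)
      (φ := fun y : EuclideanSpace ℝ (Fin d) => η * μ₂ * ∑ i, |y i|) ha.le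
      (inner_sub_softThreshold_le hc hs x)
      (by rw [hray]; exact mul_sum_abs_smul_softThreshold hc hs (by positivity))
      (by rw [hxplus]; exact inner_sub_ballProj_nonpos hr w hx)
    linarith
  refine ⟨hxplus ▸ norm_ballProj_le hr w, fun x hx => ?_, fun x hx heq => ?_⟩
  · linarith [key x hx, mul_nonneg (half_pos ha).le (sq_nonneg ‖x - xplus‖)]
  · have hdist : ‖x - xplus‖ ^ 2 = 0 := by nlinarith [key x hx, sq_nonneg ‖x - xplus‖]
    rwa [sq_eq_zero_iff, norm_eq_zero, sub_eq_zero] at hdist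
end
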